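/- arXiv:1006.3191 — 5 statements merged into one kernel-verified Lean document; each statement's English description precedes it below -/
import Mathlib

section
/- For every integer k ≥ 1 and every finite set P of points in the plane ℝ², there exists a k-coloring χ : P → Fin k such that every closed half-plane h with |P ∩ h| ≥ 2k − 1 is polychromatic, i.e., for every color i < k there exists a point p ∈ P ∩ h with χ(p) = i. (Upper bound part of the main theorem: f_H(k) ≤ 2k − 1.) -/
/-!
Say that `p` is among the `m` lowest points of `P` in direction `φ` if fewer than `m` points of
`P` lie strictly below `p` in that direction. If `t` is the unique lowest point of `P` in some
direction `α`, then turning away from `α` (by less than half a turn) can only push points below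
`t`; hence the directions in which `t` is among the `m` lowest form a closed arc of the circle,
which misses `α + π` once `m < #P`. These arcs cover the circle, and a minimal subcover has
multiplicity at most two, so the set `T` of the owners of its arcs meets the `m` lowest points
in every direction in one or two points.

A half-plane with at least `m` points of `P` contains the `m` lowest points in its inner normal
direction; so for `m = 2k + 1` it meets `T` and keeps at least `2k - 1` points outside `T`.
Giving `T` one colour and colouring `P \ T` by induction on `k` proves the theorem.
-/

open scoped Classical

open Finset Real

namespace HalfplaneColoring

section Rank

variable {α β : Type*} [LinearOrder β]

def numBelow (P : Finset α) (f : α → β) (p : α) : ℕ := #{q ∈ P | f q < f p}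

/-- With ties, this may have more than `m` elements. -/
def lowest (P : Finset α) (f : α → β) (m : ℕ) : Finset α := {p ∈ P | numBelow P f p < m}

lemma numBelow_eq_zero {P : Finset α} {f : α → β} {t : α} (ht : ∀ q ∈ P, f t ≤ f q) :
    numBelow P f t = 0 :=
  card_eq_zero.2 (filter_eq_empty_iff.2 fun q hq => (ht q hq).not_gt)

lemma numBelow_eq_card_sub_one {P : Finset α} {f : α → β} {t : α} (ht : t ∈ P)
    (hmax : ∀ q ∈ P, q ≠ t → f q < f t) : numBelow P f t = #P - 1 := by
  rw [← card_erase_of_mem ht, numBelow]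
  congr 1
  ext q
  simp only [mem_filter, mem_erase]
  exact ⟨fun h => ⟨fun hq => (hq ▸ h.2).false, h.1⟩, fun h => ⟨h.2, hmax q h.2 h.1⟩⟩

lemma lowest_subset (P : Finset α) (f : α → β) (m : ℕ) : lowest P f m ⊆ P := filter_subset _ _

lemma lowest_comp_of_strictMono {γ : Type*} [LinearOrder γ] {g : β → γ} (hg : StrictMono g)
    (P : Finset α) (f : α → β) (m : ℕ) : lowest P (g ∘ f) m = lowest P f m := by
  unfold lowest numBelow
  congr! 4 with p - q
  exact hg.lt_iff_lt

lemma lowest_eq_self {P : Finset α} {m : ℕ} (h : #P ≤ m) (f : α → β) : lowest P f m = P :=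
  filter_true_of_mem fun p hp =>
    (card_lt_card (filter_ssubset.2 ⟨p, hp, lt_irrefl (f p)⟩)).trans_le h

lemma min_le_card_lowest (P : Finset α) (f : α → β) (m : ℕ) : min m #P ≤ #(lowest P f m) := by
  by_contra! h
  obtain ⟨q, hq, hmin⟩ := (P \ lowest P f m).exists_min_image f (by
    rw [← card_pos, card_sdiff_of_subset (lowest_subset P f m)]
    omega)
  have hbelow : {r ∈ P | f r < f q} ⊆ lowest P f m := fun r hr => by
    rw [mem_filter] at hr
    by_contra hr'
    exact (hmin r (mem_sdiff.2 ⟨hr.1, hr'⟩)).not_gt hr.2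
  rw [mem_sdiff] at hq
  exact hq.2 (mem_filter.2 ⟨hq.1, (card_le_card hbelow).trans_lt (by omega)⟩)

lemma lowest_subset_filter_le {P : Finset α} {f : α → β} {m : ℕ} {b : β}
    (h : m ≤ #{p ∈ P | f p ≤ b}) : lowest P f m ⊆ {p ∈ P | f p ≤ b} := by
  intro p hp
  rw [lowest, mem_filter] at hp
  refine mem_filter.2 ⟨hp.1, ?_⟩
  by_contra! hpb
  have : {q ∈ P | f q ≤ b} ⊆ {q ∈ P | f q < f p} :=
    monotone_filter_right P fun _ _ hq => hq.trans_lt hpb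
  exact (h.trans (card_le_card this)).not_gt hp.2

end Rank

lemma card_inter_add_card_le {α : Type*} [DecidableEq α] {T L S : Finset α} (hLS : L ⊆ S) :
    #(T ∩ S) + #L ≤ #(T ∩ L) + #S := by
  have h : T ∩ S ⊆ (T ∩ L) ∪ (S \ L) := fun p hp => by
    simp only [mem_union, mem_inter, mem_sdiff] at hp ⊢
    tauto
  have := (card_le_card h).trans (card_union_le _ _)
  rw [card_sdiff_of_subset hLS] at this
  have := card_le_card hLS
  omega

section Coloring

variable {α : Type*}

def IsShallowHittingSet (ranges : Set (Set α)) (m : ℕ) (P T : Finset α) : Prop :=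
  T ⊆ P ∧ ∀ R ∈ ranges, m ≤ #{p ∈ P | p ∈ R} →
    (∃ p ∈ T, p ∈ R) ∧ #{p ∈ T | p ∈ R} + m ≤ #{p ∈ P | p ∈ R} + 2

theorem exists_coloring_of_isShallowHittingSet (ranges : Set (Set α))
    (hranges : ∀ m, 0 < m → ∀ P : Finset α, ∃ T, IsShallowHittingSet ranges m P T)
    {k : ℕ} (hk : 1 ≤ k) (P : Finset α) :
    ∃ χ : α → Fin k, ∀ R ∈ ranges, 2 * k - 1 ≤ #{p ∈ P | p ∈ R} →
      ∀ i, ∃ p ∈ P, p ∈ R ∧ χ p = i := by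
  induction k, hk using Nat.le_induction generalizing P with
  | base =>
    refine ⟨fun _ => 0, fun R _ hR i => ?_⟩
    obtain ⟨p, hp⟩ := card_pos.1 (by omega : 0 < #{p ∈ P | p ∈ R})
    rw [mem_filter] at hp
    exact ⟨p, hp.1, hp.2, Subsingleton.elim _ _⟩
  | succ k hk ih =>
    obtain ⟨T, hTP, hT⟩ := hranges (2 * k + 1) (by omega) P
    obtain ⟨χ, hχ⟩ := ih (P \ T)
    refine ⟨fun p => if p ∈ T then Fin.last k else (χ p).castSucc, fun R hR hcard i => ?_⟩
    obtain ⟨⟨t, ht, htR⟩, hrest⟩ := hT R hR (by omega)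
    induction i using Fin.lastCases with
    | last => exact ⟨t, hTP ht, htR, if_pos ht⟩
    | cast j =>
      have hsplit : {p ∈ P \ T | p ∈ R} = {p ∈ P | p ∈ R} \ {p ∈ T | p ∈ R} := by
        ext p
        simp only [mem_sdiff, mem_filter]
        tauto
      have hcard' : 2 * k - 1 ≤ #{p ∈ P \ T | p ∈ R} := by
        rw [hsplit, card_sdiff_of_subset (filter_subset_filter _ hTP)]
        omega
      obtain ⟨p, hp, hpR, rfl⟩ := hχ R hR hcard' j
      rw [mem_sdiff] at hp
      exact ⟨p, hp.1, hpR, if_neg hp.2⟩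

end Coloring

section Arcs

/-- `φ` lies on the arc `[x, y]` of the circle `ℝ ⧸ cℤ`. -/
def InArc (c x y φ : ℝ) : Prop := ∃ n : ℤ, φ + n * c ∈ Set.Icc x y

variable {ι : Type*} {c : ℝ}

lemma inArc_sub_int_mul (n : ℤ) {x y φ : ℝ} :
    InArc c (x - n * c) (y - n * c) φ ↔ InArc c x y φ := by
  constructor <;> rintro ⟨n', h₁, h₂⟩
  · exact ⟨n' + n, by push_cast; linarith, by push_cast; linarith⟩
  · exact ⟨n' - n, by push_cast; linarith, by push_cast; linarith⟩

lemma exists_Icc_subset_of_two_lt_card (u v : ι → ℝ) {S : Finset ι} {φ : ℝ} (hS : 2 < #S)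
    (hφ : ∀ j ∈ S, φ ∈ Set.Icc (u j) (v j)) :
    ∃ j ∈ S, ∀ ψ ∈ Set.Icc (u j) (v j), ∃ j' ∈ S, j' ≠ j ∧ ψ ∈ Set.Icc (u j') (v j') := by
  have hne : S.Nonempty := card_pos.1 (by omega)
  obtain ⟨a, ha, hua⟩ := S.exists_min_image u hne
  obtain ⟨b, hb, hvb⟩ := S.exists_max_image v hne
  obtain ⟨j, hj⟩ : ((S.erase a).erase b).Nonempty := by
    have := (S.erase a).pred_card_le_card_erase (a := b)
    have := S.pred_card_le_card_erase (a := a)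
    exact card_pos.1 (by omega)
  simp only [mem_erase] at hj
  refine ⟨j, hj.2.2, fun ψ hψ => ?_⟩
  rcases le_total ψ φ with h | h
  · exact ⟨a, ha, Ne.symm hj.2.1, (hua j hj.2.2).trans hψ.1, h.trans (hφ a ha).2⟩
  · exact ⟨b, hb, Ne.symm hj.1, (hφ b hb).1.trans h, hψ.2.trans (hvb j hj.2.2)⟩

lemma exists_redundant_arc (x y : ι → ℝ) {S : Finset ι} {φ : ℝ} (hS : 2 < #S)
    (hφ : ∀ j ∈ S, InArc c (x j) (y j) φ) :
    ∃ j ∈ S, ∀ ψ, InArc c (x j) (y j) ψ → ∃ j' ∈ S, j' ≠ j ∧ InArc c (x j') (y j') ψ := by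
  choose! n hn using hφ
  obtain ⟨j, hj, hred⟩ := exists_Icc_subset_of_two_lt_card (fun j => x j - n j * c)
    (fun j => y j - n j * c) (φ := φ) hS fun j hj =>
      ⟨by linarith [(hn j hj).1], by linarith [(hn j hj).2]⟩
  refine ⟨j, hj, fun ψ hψ => ?_⟩
  obtain ⟨n', hn'⟩ := (inArc_sub_int_mul (n j)).2 hψ
  obtain ⟨j', hj', hne, h⟩ := hred _ hn'
  exact ⟨j', hj', hne, (inArc_sub_int_mul (n j')).1 ⟨n', h⟩⟩

lemma exists_subcover_card_filter_le_two (x y : ι → ℝ) {J : Finset ι}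
    (hJ : ∀ φ, ∃ j ∈ J, InArc c (x j) (y j) φ) :
    ∃ J' ⊆ J, (∀ φ, ∃ j ∈ J', InArc c (x j) (y j) φ) ∧
      ∀ φ, #{j ∈ J' | InArc c (x j) (y j) φ} ≤ 2 := by
  obtain ⟨J', hJ', hmin⟩ := exists_min_image
    {K ∈ J.powerset | ∀ φ, ∃ j ∈ K, InArc c (x j) (y j) φ} card
    ⟨J, mem_filter.2 ⟨mem_powerset_self J, hJ⟩⟩
  rw [mem_filter, mem_powerset] at hJ'
  refine ⟨J', hJ'.1, hJ'.2, fun φ => ?_⟩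
  by_contra! h
  obtain ⟨j, hj, hred⟩ := exists_redundant_arc x y h fun j hj => (mem_filter.1 hj).2
  have hjJ' := (mem_filter.1 hj).1
  have hcov : ∀ ψ, ∃ i ∈ J'.erase j, InArc c (x i) (y i) ψ := fun ψ => by
    obtain ⟨i, hi, hψ⟩ := hJ'.2 ψ
    by_cases hij : i = j
    · obtain ⟨i', hi', hne, h'⟩ := hred ψ (hij ▸ hψ)
      exact ⟨i', mem_erase.2 ⟨hne, (mem_filter.1 hi').1⟩, h'⟩
    · exact ⟨i, mem_erase.2 ⟨hij, hi⟩, hψ⟩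
  have := hmin (J'.erase j)
    (mem_filter.2 ⟨mem_powerset.2 ((erase_subset _ _).trans hJ'.1), hcov⟩)
  rw [card_erase_of_mem hjJ'] at this
  have := card_pos.2 ⟨j, hjJ'⟩
  omega

end Arcs

section Directions

open Filter Topology

noncomputable def proj (φ : ℝ) (p : ℝ × ℝ) : ℝ := cos φ * p.1 + sin φ * p.2

lemma proj_sub (φ : ℝ) (p q : ℝ × ℝ) : proj φ (p - q) = proj φ p - proj φ q := by
  simp only [proj, Prod.fst_sub, Prod.snd_sub]
  ring

lemma proj_add_int_mul_two_pi (φ : ℝ) (n : ℤ) : proj (φ + n * (2 * π)) = proj φ := by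
  funext p
  simp only [proj, cos_add_int_mul_two_pi, sin_add_int_mul_two_pi]

lemma proj_add_pi (φ : ℝ) (p : ℝ × ℝ) : proj (φ + π) p = -proj φ p := by
  simp only [proj, cos_add_pi, sin_add_pi]
  ring

lemma proj_sub_pi (φ : ℝ) : proj (φ - π) = proj (φ + π) := by
  funext p
  simp only [proj, cos_add_pi, sin_add_pi, cos_sub_pi, sin_sub_pi]

lemma proj_add (φ δ : ℝ) (p : ℝ × ℝ) :
    proj (φ + δ) p = cos δ * proj φ p + sin δ * proj (φ + π / 2) p := by
  simp only [proj, cos_add, sin_add, cos_pi_div_two, sin_pi_div_two]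
  ring

lemma eq_zero_of_proj_eq_zero {v : ℝ × ℝ} {φ : ℝ} (h₁ : proj φ v = 0)
    (h₂ : proj (φ + π / 2) v = 0) : v = 0 := by
  simp only [proj, cos_add_pi_div_two, sin_add_pi_div_two] at h₁ h₂
  ext <;> simp only [Prod.fst_zero, Prod.snd_zero]
  · linear_combination cos φ * h₁ - sin φ * h₂ - v.1 * sin_sq_add_cos_sq φ
  · linear_combination sin φ * h₁ + cos φ * h₂ - v.2 * sin_sq_add_cos_sq φ

lemma continuous_proj (p : ℝ × ℝ) : Continuous fun φ => proj φ p := by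
  unfold proj
  fun_prop

lemma exists_pos_forall_eq_mul_proj {a : ℝ × ℝ} (ha : a ≠ 0) :
    ∃ r > 0, ∃ φ, ∀ p : ℝ × ℝ, a.1 * p.1 + a.2 * p.2 = r * proj φ p := by
  set z : ℂ := ⟨a.1, a.2⟩
  have hz : z ≠ 0 := fun h => ha (Prod.ext (congrArg Complex.re h) (congrArg Complex.im h))
  refine ⟨‖z‖, norm_pos_iff.2 hz, z.arg, fun p => ?_⟩
  have h₁ : ‖z‖ * cos z.arg = a.1 := Complex.norm_mul_cos_arg z
  have h₂ : ‖z‖ * sin z.arg = a.2 := Complex.norm_mul_sin_arg z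
  rw [proj, ← h₁, ← h₂]
  ring

lemma proj_mul_sin_sub (v : ℝ × ℝ) (x y z : ℝ) :
    proj y v * sin (z - x) = proj x v * sin (z - y) + proj z v * sin (y - x) := by
  simp only [proj, sin_sub]
  ring

lemma proj_nonneg_of_mem_Icc {v : ℝ × ℝ} {x y z : ℝ} (hx : 0 ≤ proj x v) (hz : 0 ≤ proj z v)
    (hy : y ∈ Set.Icc x z) (hxz : z - x < π) : 0 ≤ proj y v := by
  rcases (hy.1.trans hy.2).eq_or_lt with hxz' | hxz'
  · rwa [show y = x by linarith [hy.1, hy.2]]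
  have h₁ := sin_nonneg_of_nonneg_of_le_pi (sub_nonneg.2 hy.2) (by linarith [hy.1])
  have h₂ := sin_nonneg_of_nonneg_of_le_pi (sub_nonneg.2 hy.1) (by linarith [hy.2])
  refine nonneg_of_mul_nonneg_left ?_ (sin_pos_of_pos_of_lt_pi (sub_pos.2 hxz') hxz)
  rw [proj_mul_sin_sub v x y z]
  exact add_nonneg (mul_nonneg hx h₁) (mul_nonneg hz h₂)

lemma isClosed_setOf_numBelow_proj_lt (P : Finset (ℝ × ℝ)) (t : ℝ × ℝ) (m : ℕ) :
    IsClosed {φ | numBelow P (proj φ) t < m} := by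
  have hlsc : ∀ φ, ∀ᶠ ψ in 𝓝 φ, numBelow P (proj φ) t ≤ numBelow P (proj ψ) t := fun φ => by
    have hq : ∀ q ∈ P, ∀ᶠ ψ in 𝓝 φ, proj φ q < proj φ t → proj ψ q < proj ψ t := fun q _ => by
      by_cases h : proj φ q < proj φ t
      · exact ((continuous_proj q).continuousAt.eventually_lt
          (continuous_proj t).continuousAt h).mono fun _ h' _ => h'
      · exact Eventually.of_forall fun _ h' => absurd h' h
    filter_upwards [(eventually_all_finset P).2 hq] with ψ hψ
    exact card_le_card (monotone_filter_right P hψ)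
  refine isOpen_compl_iff.1 (isOpen_iff_mem_nhds.2 fun φ hφ => ?_)
  filter_upwards [hlsc φ] with ψ hψ hlt
  exact hφ (hψ.trans_lt hlt)

def IsUniqueLowest (P : Finset (ℝ × ℝ)) (α : ℝ) (t : ℝ × ℝ) : Prop :=
  ∀ q ∈ P, q ≠ t → proj α t < proj α q

variable {P : Finset (ℝ × ℝ)} {t : ℝ × ℝ} {α : ℝ} {m : ℕ}

lemma numBelow_proj_le_of_mem_uIcc {φ ψ : ℝ} (ht : ∀ q ∈ P, proj α t ≤ proj α q)
    (hφ : |φ - α| < π) (hψ : ψ ∈ Set.uIcc α φ) :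
    numBelow P (proj ψ) t ≤ numBelow P (proj φ) t := by
  refine card_le_card (monotone_filter_right P fun q hq hψq => ?_)
  refine lt_of_not_ge fun hφq => hψq.not_ge ?_
  have hαq := ht q hq
  rw [← sub_nonneg, ← proj_sub] at hαq hφq ⊢
  rw [abs_lt] at hφ
  rcases le_total α φ with h | h
  · rw [Set.uIcc_of_le h] at hψ
    exact proj_nonneg_of_mem_Icc hαq hφq hψ (by linarith)
  · rw [Set.uIcc_of_ge h] at hψ
    exact proj_nonneg_of_mem_Icc hφq hαq hψ (by linarith)

lemma IsUniqueLowest.proj_le (h : IsUniqueLowest P α t) : ∀ q ∈ P, proj α t ≤ proj α q :=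
  fun q hq => by
    rcases eq_or_ne q t with rfl | hqt
    exacts [le_rfl, (h q hq hqt).le]

lemma numBelow_proj_add_pi (ht : t ∈ P) (hα : IsUniqueLowest P α t) :
    numBelow P (proj (α + π)) t = #P - 1 := by
  refine numBelow_eq_card_sub_one ht fun q hq hqt => ?_
  rw [proj_add_pi, proj_add_pi]
  exact neg_lt_neg (hα q hq hqt)

lemma abs_sub_lt_pi_of_numBelow_lt {φ : ℝ} (ht : t ∈ P) (hα : IsUniqueLowest P α t)
    (hmP : m < #P) (hφ : φ ∈ Set.Icc (α - π) (α + π)) (hlt : numBelow P (proj φ) t < m) :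
    |φ - α| < π := by
  have hend : proj φ = proj (α + π) → m ≤ numBelow P (proj φ) t := fun h => by
    rw [h, numBelow_proj_add_pi ht hα]
    omega
  rw [abs_lt]
  constructor
  · by_contra! h
    have := hend (by rw [show φ = α - π by linarith [hφ.1], proj_sub_pi])
    omega
  · by_contra! h
    have := hend (by rw [show φ = α + π by linarith [hφ.2]])
    omega

lemma ordConnected_setOf_numBelow_lt (ht : t ∈ P) (hα : IsUniqueLowest P α t) (hmP : m < #P) :
    (Set.Icc (α - π) (α + π) ∩ {φ | numBelow P (proj φ) t < m}).OrdConnected := by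
  refine ⟨fun φ₁ h₁ φ₂ h₂ ψ hψ => ⟨⟨h₁.1.1.trans hψ.1, hψ.2.trans h₂.1.2⟩, ?_⟩⟩
  rcases le_total ψ α with h | h
  · exact (numBelow_proj_le_of_mem_uIcc hα.proj_le
      (abs_sub_lt_pi_of_numBelow_lt ht hα hmP h₁.1 h₁.2)
      (Set.mem_uIcc.2 (Or.inr ⟨hψ.1, h⟩))).trans_lt h₁.2
  · exact (numBelow_proj_le_of_mem_uIcc hα.proj_le
      (abs_sub_lt_pi_of_numBelow_lt ht hα hmP h₂.1 h₂.2)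
      (Set.mem_uIcc.2 (Or.inl ⟨h, hψ.2⟩))).trans_lt h₂.2

lemma exists_inArc_iff (ht : t ∈ P) (hα : IsUniqueLowest P α t) (hm : 0 < m) (hmP : m < #P) :
    ∃ x y, ∀ φ, InArc (2 * π) x y φ ↔ numBelow P (proj φ) t < m := by
  set I := Set.Icc (α - π) (α + π) ∩ {φ | numBelow P (proj φ) t < m}
  have hαI : α ∈ I :=
    ⟨⟨by linarith [pi_pos], by linarith [pi_pos]⟩, by simp [numBelow_eq_zero hα.proj_le, hm]⟩
  have hIcc : I = Set.Icc (sInf I) (sSup I) :=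
    eq_Icc_csInf_csSup_of_connected_bdd_closed
      ⟨⟨α, hαI⟩, (ordConnected_setOf_numBelow_lt ht hα hmP).isPreconnected⟩
      (bddBelow_Icc.mono Set.inter_subset_left) (bddAbove_Icc.mono Set.inter_subset_left)
      (isClosed_Icc.inter (isClosed_setOf_numBelow_proj_lt P t m))
  refine ⟨sInf I, sSup I, fun φ => ⟨?_, fun hφ => ?_⟩⟩
  · rintro ⟨n, hn⟩
    rw [← hIcc] at hn
    simpa only [Set.mem_ofPred_eq, proj_add_int_mul_two_pi] using hn.2
  · obtain ⟨n, hn, -⟩ := existsUnique_add_zsmul_mem_Ico two_pi_pos φ (α - π)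
    rw [zsmul_eq_mul] at hn
    refine ⟨n, hIcc ▸ ⟨⟨hn.1, by linarith [hn.2]⟩, ?_⟩⟩
    simpa only [Set.mem_ofPred_eq, proj_add_int_mul_two_pi] using hφ

lemma eventually_proj_pos {v : ℝ × ℝ} {φ : ℝ} (h₀ : 0 ≤ proj φ v)
    (h₁ : proj φ v = 0 → 0 < proj (φ + π / 2) v) : ∀ᶠ δ in 𝓝[>] 0, 0 < proj (φ + δ) v := by
  suffices ∀ᶠ δ in 𝓝[>] 0, 0 < cos δ * proj φ v + sin δ * proj (φ + π / 2) v from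
    this.mono fun δ h => by rwa [proj_add]
  rcases h₀.lt_or_eq with h | h
  · have hcont : ContinuousAt (fun δ => cos δ * proj φ v + sin δ * proj (φ + π / 2) v) 0 := by
      fun_prop
    exact nhdsWithin_le_nhds (continuousAt_const.eventually_lt hcont (by simpa using h))
  · filter_upwards [Ioo_mem_nhdsGT pi_pos] with δ hδ
    rw [← h, mul_zero, zero_add]
    exact mul_pos (sin_pos_of_pos_of_lt_pi hδ.1 hδ.2) (h₁ h.symm)

lemma exists_numBelow_eq_zero_isUniqueLowest (hP : P.Nonempty) (φ : ℝ) :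
    ∃ t ∈ P, numBelow P (proj φ) t = 0 ∧ ∃ α, IsUniqueLowest P α t := by
  -- Among the lowest points in direction `φ`, the one lowest in direction `φ + π / 2` becomes
  -- the unique lowest point after a small turn from `φ` towards `φ + π / 2`.
  obtain ⟨t, ht, hmin⟩ := P.exists_min_image (fun p => toLex (proj φ p, proj (φ + π / 2) p)) hP
  have hlex : ∀ q ∈ P, proj φ t < proj φ q ∨
      proj φ t = proj φ q ∧ proj (φ + π / 2) t ≤ proj (φ + π / 2) q :=
    fun q hq => Prod.Lex.toLex_le_toLex.1 (hmin q hq)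
  have hle : ∀ q ∈ P, proj φ t ≤ proj φ q := fun q hq => by
    rcases hlex q hq with h | h
    exacts [h.le, h.1.le]
  refine ⟨t, ht, numBelow_eq_zero hle, ?_⟩
  have hnear : ∀ q ∈ P, ∀ᶠ δ in 𝓝[>] 0, q ≠ t → proj (φ + δ) t < proj (φ + δ) q := by
    intro q hq
    by_cases hqt : q = t
    · exact Eventually.of_forall fun _ h => absurd hqt h
    refine (eventually_proj_pos (v := q - t) (φ := φ) ?_ fun h₀ => ?_).mono fun δ h _ => ?_
    · rw [proj_sub, sub_nonneg]
      exact hle q hq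
    · have hne : proj (φ + π / 2) (q - t) ≠ 0 := fun h =>
        hqt (sub_eq_zero.1 (eq_zero_of_proj_eq_zero h₀ h))
      rw [proj_sub, sub_eq_zero] at h₀
      rcases hlex q hq with h | h
      · exact absurd h₀ h.ne'
      · rw [proj_sub] at hne ⊢
        exact (sub_nonneg.2 h.2).lt_of_ne hne.symm
    · rwa [proj_sub, sub_pos] at h
  obtain ⟨δ, hδ⟩ := ((eventually_all_finset P).2 hnear).exists
  exact ⟨φ + δ, hδ⟩

end Directions

section Halfplanes

variable {P : Finset (ℝ × ℝ)} {m : ℕ}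

theorem exists_subset_meets_lowest_of_lt (hm : 0 < m) (hmP : m < #P) :
    ∃ T ⊆ P, ∀ φ, (T ∩ lowest P (proj φ) m).Nonempty ∧ #(T ∩ lowest P (proj φ) m) ≤ 2 := by
  set H := {t ∈ P | ∃ α, IsUniqueLowest P α t}
  have harc : ∀ t, ∃ x y : ℝ, t ∈ H → ∀ φ, InArc (2 * π) x y φ ↔ numBelow P (proj φ) t < m := by
    intro t
    by_cases ht : t ∈ H
    · obtain ⟨htP, α, hα⟩ := mem_filter.1 ht
      obtain ⟨x, y, h⟩ := exists_inArc_iff htP hα hm hmP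
      exact ⟨x, y, fun _ => h⟩
    · exact ⟨0, 0, fun h => absurd h ht⟩
  choose x y hxy using harc
  obtain ⟨T, hTH, hcov, hmult⟩ := exists_subcover_card_filter_le_two x y (J := H) fun φ => by
    obtain ⟨t, ht, h0, hα⟩ := exists_numBelow_eq_zero_isUniqueLowest (card_pos.1 (hm.trans hmP)) φ
    have htH : t ∈ H := mem_filter.2 ⟨ht, hα⟩
    exact ⟨t, htH, (hxy t htH φ).2 (by omega)⟩
  have hT : ∀ φ, T ∩ lowest P (proj φ) m = {t ∈ T | InArc (2 * π) (x t) (y t) φ} := fun φ => by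
    ext t
    simp only [mem_inter, lowest, mem_filter]
    constructor
    · rintro ⟨htT, -, h⟩
      exact ⟨htT, (hxy t (hTH htT) φ).2 h⟩
    · rintro ⟨htT, h⟩
      exact ⟨htT, (mem_filter.1 (hTH htT)).1, (hxy t (hTH htT) φ).1 h⟩
  refine ⟨T, hTH.trans (filter_subset _ _), fun φ => ?_⟩
  rw [hT]
  obtain ⟨t, ht, h⟩ := hcov φ
  exact ⟨⟨t, mem_filter.2 ⟨ht, h⟩⟩, hmult φ⟩

theorem exists_subset_meets_lowest (hm : 0 < m) (hP : P.Nonempty) :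
    ∃ T ⊆ P, ∀ φ, (T ∩ lowest P (proj φ) m).Nonempty ∧ #(T ∩ lowest P (proj φ) m) ≤ 2 := by
  rcases le_or_gt #P m with hsmall | hbig
  · obtain ⟨t, ht⟩ := hP
    refine ⟨{t}, singleton_subset_iff.2 ht, fun φ => ?_⟩
    rw [lowest_eq_self hsmall, singleton_inter_of_mem ht]
    simp
  · exact exists_subset_meets_lowest_of_lt hm hbig

def halfplanes : Set (Set (ℝ × ℝ)) :=
  {R | ∃ a : ℝ × ℝ, ∃ b : ℝ, a ≠ 0 ∧ R = {p | a.1 * p.1 + a.2 * p.2 ≤ b}}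

theorem exists_isShallowHittingSet_halfplanes (hm : 0 < m) (P : Finset (ℝ × ℝ)) :
    ∃ T, IsShallowHittingSet halfplanes m P T := by
  rcases P.eq_empty_or_nonempty with rfl | hP
  · exact ⟨∅, empty_subset _, fun R _ h => by simp at h; omega⟩
  obtain ⟨T, hTP, hT⟩ := exists_subset_meets_lowest hm hP
  refine ⟨T, hTP, ?_⟩
  rintro _ ⟨a, b, ha, rfl⟩ hcard
  simp only [Set.mem_ofPred_eq] at hcard ⊢
  obtain ⟨r, hr, φ, hφ⟩ := exists_pos_forall_eq_mul_proj ha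
  have hf : (fun p : ℝ × ℝ => a.1 * p.1 + a.2 * p.2) = (r * ·) ∘ proj φ := funext hφ
  have hLS : lowest P (proj φ) m ⊆ {p ∈ P | a.1 * p.1 + a.2 * p.2 ≤ b} := by
    have := lowest_subset_filter_le hcard
    rwa [hf, lowest_comp_of_strictMono (strictMono_mul_left_of_pos hr)] at this
  have hL : m ≤ #(lowest P (proj φ) m) := by
    have := min_le_card_lowest P (proj φ) m
    have := hcard.trans (card_filter_le P _)
    omega
  have hTS : {p ∈ T | a.1 * p.1 + a.2 * p.2 ≤ b} = T ∩ {p ∈ P | a.1 * p.1 + a.2 * p.2 ≤ b} := by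
    ext p
    simp only [mem_filter, mem_inter]
    exact ⟨fun h => ⟨h.1, hTP h.1, h.2⟩, fun h => ⟨h.1, h.2.2⟩⟩
  obtain ⟨t, ht⟩ := (hT φ).1
  rw [mem_inter] at ht
  refine ⟨⟨t, ht.1, (mem_filter.1 (hLS ht.2)).2⟩, ?_⟩
  have := card_inter_add_card_le (T := T) hLS
  have := (hT φ).2
  rw [hTS]
  omega

end Halfplanes

end HalfplaneColoring

open HalfplaneColoring

/-- Upper bound part of the main theorem: `f_H(k) ≤ 2k - 1`.
For every `k ≥ 1` and every finite point set `P ⊆ ℝ²`, there is a `k`-coloring of `P`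
such that every (closed) half-plane containing at least `2k - 1` points of `P` is
polychromatic. A half-plane is `{x | a·x ≤ b}` with `a ≠ 0`. -/
theorem points_halfplanes_polychromatic (k : ℕ) (hk : 1 ≤ k) (P : Finset (ℝ × ℝ)) :
    ∃ χ : ℝ × ℝ → Fin k,
      ∀ (a : ℝ × ℝ) (b : ℝ), a ≠ 0 →
        2 * k - 1 ≤ (P.filter (fun p => a.1 * p.1 + a.2 * p.2 ≤ b)).card →
        ∀ i : Fin k, ∃ p ∈ P.filter (fun p => a.1 * p.1 + a.2 * p.2 ≤ b), χ p = i := by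
  obtain ⟨χ, hχ⟩ := exists_coloring_of_isShallowHittingSet halfplanes
    (fun _ hm => exists_isShallowHittingSet_halfplanes hm) hk P
  refine ⟨χ, fun a b ha hcard i => ?_⟩
  obtain ⟨p, hp, hpR, hχp⟩ := hχ _ ⟨a, b, ha, rfl⟩ (by simpa using hcard) i
  exact ⟨p, mem_filter.2 ⟨hp, hpR⟩, hχp⟩
end

section
/- For all integers k ≥ 1 and n ≥ 2k − 1, there exists a set P of exactly n points in the plane ℝ² such that for every k-coloring χ : P → Fin k there exist a half-plane h and a color i < k with |P ∩ h| ≥ 2k − 2 and such that no point of P ∩ h has color i. (Lower bound part of the main theorem: f_H(k) > 2k − 2.) -/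
open scoped Classical

/-- Lower bound part of the main theorem: `f_H(k) > 2k - 2`.
For all `k ≥ 1` and `n ≥ 2k - 1` there is a set of `n` points in the plane such that
for every `k`-coloring there is a half-plane containing at least `2k - 2` of the points
that misses some color. -/
theorem points_halfplanes_lower_bound (k n : ℕ) (hk : 1 ≤ k) (hn : 2 * k - 1 ≤ n) :
    ∃ P : Finset (ℝ × ℝ), P.card = n ∧
      ∀ χ : ℝ × ℝ → Fin k,
        ∃ (a : ℝ × ℝ) (b : ℝ) (i : Fin k), a ≠ 0 ∧
          2 * k - 2 ≤ (P.filter (fun p => a.1 * p.1 + a.2 * p.2 ≤ b)).card ∧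
          ∀ p ∈ P.filter (fun p => a.1 * p.1 + a.2 * p.2 ≤ b), χ p ≠ i := by
  have hk1 : 1 ≤ 2 * k - 1 := by omega
  set qf : ℕ → ℝ × ℝ := fun j => (((j : ℝ) + 1), ((j : ℝ) + 1) ^ 2) with hqf
  set ef : ℕ → ℝ × ℝ := fun t => (((t : ℝ) + 1), -(4 * (k : ℝ) ^ 2)) with hef
  have hqinj : Set.InjOn qf ↑(Finset.range (2 * k - 1)) := by
    intro a _ b _ h
    have h1 : (a : ℝ) + 1 = (b : ℝ) + 1 := congrArg Prod.fst h
    have : (a : ℝ) = b := by linarith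
    exact_mod_cast this
  have heinj : Set.InjOn ef ↑(Finset.range (n - (2 * k - 1))) := by
    intro a _ b _ h
    have h1 : (a : ℝ) + 1 = (b : ℝ) + 1 := congrArg Prod.fst h
    have : (a : ℝ) = b := by linarith
    exact_mod_cast this
  set Q : Finset (ℝ × ℝ) := (Finset.range (2 * k - 1)).image qf with hQ
  set E : Finset (ℝ × ℝ) := (Finset.range (n - (2 * k - 1))).image ef with hE
  have hdis : Disjoint Q E := by
    rw [Finset.disjoint_left]
    rintro p hpQ hpE
    obtain ⟨j, _, rfl⟩ := Finset.mem_image.mp hpQ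
    obtain ⟨t, _, he⟩ := Finset.mem_image.mp hpE
    have h2 : -(4 * (k : ℝ) ^ 2) = ((j : ℝ) + 1) ^ 2 := congrArg Prod.snd he
    have hkr : (1 : ℝ) ≤ (k : ℝ) := by exact_mod_cast hk
    nlinarith [sq_nonneg ((j : ℝ) + 1)]
  refine ⟨Q ∪ E, ?_, ?_⟩
  · rw [Finset.card_union_of_disjoint hdis, hQ, hE,
      Finset.card_image_of_injOn hqinj, Finset.card_image_of_injOn heinj,
      Finset.card_range, Finset.card_range]
    omega
  intro χ
  -- pigeonhole: some color appears at most once on Q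
  have hpig : ∃ i : Fin k,
      ((Finset.range (2 * k - 1)).filter (fun j => χ (qf j) = i)).card ≤ 1 := by
    by_contra h
    push_neg at h
    have hsum : (Finset.range (2 * k - 1)).card =
        ∑ i : Fin k, ((Finset.range (2 * k - 1)).filter (fun j => χ (qf j) = i)).card :=
      Finset.card_eq_sum_card_fiberwise (fun x _ => Finset.mem_univ _)
    have h2 : ∑ i : Fin k, 2 ≤
        ∑ i : Fin k, ((Finset.range (2 * k - 1)).filter (fun j => χ (qf j) = i)).card :=
      Finset.sum_le_sum (fun i _ => h i)
    simp [Finset.card_range] at hsum h2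
    omega
  obtain ⟨i, hi⟩ := hpig
  -- choose the index to remove
  have hchoice : ∃ j0 ∈ Finset.range (2 * k - 1),
      ∀ m ∈ Finset.range (2 * k - 1), m ≠ j0 → χ (qf m) ≠ i := by
    by_cases hex : ∃ j ∈ Finset.range (2 * k - 1), χ (qf j) = i
    · obtain ⟨j0, hj0r, hj0c⟩ := hex
      refine ⟨j0, hj0r, fun m hm hne hcm => ?_⟩
      have : m = j0 := Finset.card_le_one.mp hi m
        (Finset.mem_filter.mpr ⟨hm, hcm⟩) j0 (Finset.mem_filter.mpr ⟨hj0r, hj0c⟩)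
      exact hne this
    · push_neg at hex
      exact ⟨0, Finset.mem_range.mpr (by omega), fun m hm _ => hex m hm⟩
  obtain ⟨j0, hj0, hkey⟩ := hchoice
  set v : ℝ := (j0 : ℝ) + 1 with hv
  refine ⟨(2 * v, -1), v ^ 2 - 1 / 4, i, ?_, ?_, ?_⟩
  · intro h
    have := congrArg Prod.snd h
    norm_num at this
  · -- cardinality bound
    have hmem : ∀ m ∈ (Finset.range (2 * k - 1)).erase j0,
        qf m ∈ (Q ∪ E).filter
          (fun p => (2 * v, (-1 : ℝ)).1 * p.1 + (2 * v, (-1 : ℝ)).2 * p.2 ≤ v ^ 2 - 1 / 4) := by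
      intro m hm
      obtain ⟨hne, hmr⟩ := Finset.mem_erase.mp hm
      refine Finset.mem_filter.mpr ⟨Finset.mem_union_left _ (Finset.mem_image_of_mem _ hmr), ?_⟩
      have hmj : (1 : ℝ) ≤ ((m : ℝ) - (j0 : ℝ)) ^ 2 := by
        rcases Nat.lt_or_ge m j0 with hlt | hge
        · have : (m : ℝ) + 1 ≤ (j0 : ℝ) := by exact_mod_cast hlt
          nlinarith
        · have hlt : j0 < m := lt_of_le_of_ne hge (Ne.symm hne)
          have : (j0 : ℝ) + 1 ≤ (m : ℝ) := by exact_mod_cast hlt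
          nlinarith
      show 2 * v * ((m : ℝ) + 1) + (-1) * ((m : ℝ) + 1) ^ 2 ≤ v ^ 2 - 1 / 4
      nlinarith [hmj]
    have hsub : ((Finset.range (2 * k - 1)).erase j0).image qf ⊆
        (Q ∪ E).filter
          (fun p => (2 * v, (-1 : ℝ)).1 * p.1 + (2 * v, (-1 : ℝ)).2 * p.2 ≤ v ^ 2 - 1 / 4) := by
      intro p hp
      obtain ⟨m, hm, rfl⟩ := Finset.mem_image.mp hp
      exact hmem m hm
    have hcard : (((Finset.range (2 * k - 1)).erase j0).image qf).card = 2 * k - 2 := by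
      rw [Finset.card_image_of_injOn (hqinj.mono (by
        intro x hx
        simp only [Finset.coe_erase, Set.mem_diff] at hx
        exact hx.1))]
      rw [Finset.card_erase_of_mem hj0, Finset.card_range]
      omega
    have := Finset.card_le_card hsub
    omega
  · -- missing color
    intro p hp
    obtain ⟨hPU, hpred⟩ := Finset.mem_filter.mp hp
    have hvk : v ≤ 2 * (k : ℝ) - 1 := by
      have : j0 ≤ 2 * k - 2 := by
        have := Finset.mem_range.mp hj0; omega
      have h2 : (j0 : ℝ) ≤ 2 * (k : ℝ) - 2 := by
        have hc : ((j0 : ℕ) : ℝ) ≤ ((2 * k - 2 : ℕ) : ℝ) := by exact_mod_cast this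
        have : ((2 * k - 2 : ℕ) : ℝ) = 2 * (k : ℝ) - 2 := by
          have h2k : 2 ≤ 2 * k := by omega
          push_cast [Nat.cast_sub h2k]
          ring
        linarith [hc, this.le]
      rw [hv]; linarith
    rcases Finset.mem_union.mp hPU with hq | he
    · obtain ⟨m, hm, rfl⟩ := Finset.mem_image.mp hq
      by_cases hme : m = j0
      · exfalso
        subst hme
        have : 2 * v * ((m : ℝ) + 1) + (-1) * ((m : ℝ) + 1) ^ 2 ≤ v ^ 2 - 1 / 4 := hpred
        rw [hv] at this
        nlinarith
      · exact hkey m hm hme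
    · exfalso
      obtain ⟨t, _, rfl⟩ := Finset.mem_image.mp he
      have : 2 * v * ((t : ℝ) + 1) + (-1) * (-(4 * (k : ℝ) ^ 2)) ≤ v ^ 2 - 1 / 4 := hpred
      have ht0 : (0 : ℝ) ≤ (t : ℝ) := Nat.cast_nonneg t
      have hkr : (1 : ℝ) ≤ (k : ℝ) := by exact_mod_cast hk
      have hv1 : (1 : ℝ) ≤ v := by rw [hv]; linarith [Nat.cast_nonneg (α := ℝ) j0]
      nlinarith
end

section
/- Let P be a finite set of points in the plane ℝ² in general position (no three points of P lie on a common line) and let t ≥ 3 be an integer. Let ℰ' be the collection of all sets of the form P ∩ h where h is a half-plane and |P ∩ h| = t. Let P' ⊆ P be the set of points of P that are extreme points of the convex hull of P. Suppose N ⊆ P' is a containment-minimal hitting set for ℰ', i.e., N ∩ E ≠ ∅ for every E ∈ ℰ', and no proper subset N'' ⊊ N satisfies N'' ∩ E ≠ ∅ for every E ∈ ℰ'. Then |N ∩ E| ≤ 2 for every E ∈ ℰ'. -/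
open scoped Classical

/-!
Let `E` be a half-plane with `|P ∩ E| = t` containing three points `p₀, p₁, p₂` of `N`. By
minimality each `pᵢ` has a private half-plane `Eᵢ ∈ ℰ'` meeting `N` only in `pᵢ`; since
`|Eᵢ ∩ P| = t` and `Eᵢ` misses the other two points, it contains a point `qᵢ ∈ P` beyond `E`,
and `Eᵢ` separates the segment `[pᵢ, qᵢ]` from the side `[pⱼ, pₖ]`. Radon's theorem applied to
`p₀, p₁, p₂, qᵢ` (all of the `pⱼ` are extreme, `qᵢ` lies beyond the line) forces `[pⱼ, qᵢ]` to
cross the opposite side `[pₖ, pₗ]` for some apex `pⱼ ≠ pᵢ`. Two of the three points `qᵢ` then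
have different apexes, and a computation in barycentric coordinates shows that this either
puts one of the `pⱼ` in the convex hull of other points of `P` or puts a point of `[qᵢ, qᵢ']`
on the closed side of the line.
-/

open Set

theorem exists_apply_eq_apply_add_one_of_ne (a : Fin 3 → Fin 3) (ha : ∀ i, a i ≠ i) :
    ∃ i i', a i' = a i + 1 := by
  revert a
  decide

section Convex

variable {E : Type*} [AddCommGroup E] [Module ℝ E]

theorem disjoint_convexHull_of_le_of_lt (f : E →ₗ[ℝ] ℝ) (b : ℝ) {s t : Set E}
    (hs : ∀ x ∈ s, f x ≤ b) (ht : ∀ x ∈ t, b < f x) :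
    Disjoint (convexHull ℝ s) (convexHull ℝ t) := by
  refine Set.disjoint_left.2 fun x hxs hxt => ?_
  have h₁ : f x ≤ b := convexHull_min hs (convex_halfSpace_le f.isLinear b) hxs
  have h₂ : b < f x := convexHull_min ht (convex_halfSpace_gt f.isLinear b) hxt
  exact h₂.not_ge h₁

theorem mem_convexHull_triple_of_smul_eq {x y z w : E} {a b c : ℝ} (ha : 0 ≤ a) (hb : 0 ≤ b)
    (hc : 0 ≤ c) (habc : 0 < a + b + c) (h : a • x + b • y + c • z = (a + b + c) • w) :
    w ∈ convexHull ℝ {x, y, z} := by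
  have hw : Finset.univ.centerMass ![a, b, c] ![x, y, z] = w := by
    simp [Finset.centerMass, Fin.sum_univ_three, h, smul_smul, habc.ne']
  rw [← hw]
  refine Finset.centerMass_mem_convexHull _ (fun i _ => ?_) (by simpa [Fin.sum_univ_three])
    fun i _ => ?_
  · fin_cases i <;> assumption
  · fin_cases i <;> simp

theorem radon_four_points [FiniteDimensional ℝ E] (hE : Module.finrank ℝ E ≤ 2) (A B C D : E) :
    D ∈ convexHull ℝ {A, B, C} ∨ A ∈ convexHull ℝ {B, C, D} ∨ B ∈ convexHull ℝ {A, C, D} ∨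
      C ∈ convexHull ℝ {A, B, D} ∨ (segment ℝ A B ∩ segment ℝ C D).Nonempty ∨
      (segment ℝ A C ∩ segment ℝ B D).Nonempty ∨ (segment ℝ B C ∩ segment ℝ A D).Nonempty := by
  have hdep : ¬ AffineIndependent ℝ ![A, B, C, D] :=
    (finrank_vectorSpan_le_iff_not_affineIndependent ℝ _ (n := 2) (by simp)).1
      ((Submodule.finrank_le _).trans hE)
  obtain ⟨I, y, hyI, hyIc⟩ := Convex.radon_partition hdep
  -- Up to swapping `I` and `Iᶜ`, the index of `D` is not in `I`.
  obtain ⟨J, hJ, x, hxJ, hxJc⟩ : ∃ J : Finset (Fin 4), 3 ∉ J ∧ ∃ x,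
      x ∈ convexHull ℝ (![A, B, C, D] '' J) ∧ x ∈ convexHull ℝ (![A, B, C, D] '' ↑Jᶜ) := by
    by_cases h3 : 3 ∈ I
    · exact ⟨(Iᶜ).toFinset, by simpa using h3, y, by simpa using hyIc, by simpa using hyI⟩
    · exact ⟨I.toFinset, by simpa using h3, y, by simpa using hyI, by simpa using hyIc⟩
  have hJ_cases : ∀ J : Finset (Fin 4), 3 ∉ J → (J = ∅ ∧ Jᶜ = {0, 1, 2, 3}) ∨
      (J = {0} ∧ Jᶜ = {1, 2, 3}) ∨ (J = {1} ∧ Jᶜ = {0, 2, 3}) ∨ (J = {2} ∧ Jᶜ = {0, 1, 3}) ∨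
      (J = {0, 1} ∧ Jᶜ = {2, 3}) ∨ (J = {0, 2} ∧ Jᶜ = {1, 3}) ∨ (J = {1, 2} ∧ Jᶜ = {0, 3}) ∨
      (J = {0, 1, 2} ∧ Jᶜ = {3}) := by
    decide
  rcases hJ_cases J hJ with ⟨rfl, h⟩ | ⟨rfl, h⟩ | ⟨rfl, h⟩ | ⟨rfl, h⟩ | ⟨rfl, h⟩ | ⟨rfl, h⟩ |
      ⟨rfl, h⟩ | ⟨rfl, h⟩ <;>
    rw [h] at hxJc <;>
    simp only [Finset.coe_insert, Finset.coe_singleton, Finset.coe_empty, image_insert_eq,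
      image_singleton, image_empty, convexHull_empty, convexHull_singleton, convexHull_pair,
      mem_singleton_iff, mem_empty_iff_false, Matrix.cons_val] at hxJ hxJc
  · exact Or.inr <| Or.inl <| hxJ ▸ hxJc
  · exact Or.inr <| Or.inr <| Or.inl <| hxJ ▸ hxJc
  · exact Or.inr <| Or.inr <| Or.inr <| Or.inl <| hxJ ▸ hxJc
  · exact Or.inr <| Or.inr <| Or.inr <| Or.inr <| Or.inl ⟨x, hxJ, hxJc⟩
  · exact Or.inr <| Or.inr <| Or.inr <| Or.inr <| Or.inr <| Or.inl ⟨x, hxJ, hxJc⟩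
  · exact Or.inr <| Or.inr <| Or.inr <| Or.inr <| Or.inr <| Or.inr ⟨x, hxJ, hxJc⟩
  · exact Or.inl <| hxJc ▸ hxJ

variable (f : E →ₗ[ℝ] ℝ) {b : ℝ}

theorem exists_segment_crossing_opposite_side [FiniteDimensional ℝ E]
    (hE : Module.finrank ℝ E ≤ 2) {A B C q : E} (hA : f A ≤ b) (hB : f B ≤ b) (hC : f C ≤ b)
    (hq : b < f q) (hA_BCq : A ∉ convexHull ℝ {B, C, q}) (hB_ACq : B ∉ convexHull ℝ {A, C, q})
    (hC_ABq : C ∉ convexHull ℝ {A, B, q}) :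
    (segment ℝ A q ∩ segment ℝ B C).Nonempty ∨ (segment ℝ B q ∩ segment ℝ C A).Nonempty ∨
      (segment ℝ C q ∩ segment ℝ A B).Nonempty := by
  have hq_ABC : q ∉ convexHull ℝ {A, B, C} := fun h =>
    Set.disjoint_left.1 (disjoint_convexHull_of_le_of_lt f b (s := {A, B, C}) (t := {q})
      (by simp [hA, hB, hC]) (by simp [hq])) h (subset_convexHull ℝ _ rfl)
  rcases radon_four_points hE A B C q with h | h | h | h | h | h | h
  · exact absurd h hq_ABC
  · exact absurd h hA_BCq
  · exact absurd h hB_ACq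
  · exact absurd h hC_ABq
  · exact Or.inr <| Or.inr <| by rwa [inter_comm]
  · exact Or.inr <| Or.inl <| by rwa [inter_comm, segment_symm ℝ C]
  · exact Or.inl <| by rwa [inter_comm]

theorem false_of_segment_crossings {A B C q q' : E} (hA : f A ≤ b) (hB : f B ≤ b) (hC : f C ≤ b)
    (hq : b < f q) (hq' : b < f q') (hA_BC : A ∉ segment ℝ B C) (hB_Aq : B ∉ segment ℝ A q)
    (hC_Aqq' : C ∉ convexHull ℝ {A, q, q'}) (hAq : (segment ℝ A q ∩ segment ℝ B C).Nonempty)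
    (hBq' : (segment ℝ B q' ∩ segment ℝ C A).Nonempty) : False := by
  simp only [segment_eq_image, Set.Nonempty, mem_inter_iff, mem_image] at hAq hBq'
  obtain ⟨_, ⟨u, ⟨hu₀, hu₁⟩, rfl⟩, ⟨α, ⟨hα₀, hα₁⟩, hz⟩⟩ := hAq
  obtain ⟨_, ⟨v, ⟨hv₀, hv₁⟩, rfl⟩, ⟨β, ⟨hβ₀, hβ₁⟩, hw⟩⟩ := hBq'
  have hu : 0 < u := by
    refine hu₀.lt_of_ne fun hu => hA_BC ?_
    subst hu
    rw [segment_eq_image]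
    exact ⟨α, ⟨hα₀, hα₁⟩, by simpa using hz⟩
  have hα : 0 < α := by
    refine hα₀.lt_of_ne fun hα => hB_Aq ?_
    subst hα
    rw [segment_eq_image]
    exact ⟨u, ⟨hu₀, hu₁⟩, by simpa using hz.symm⟩
  have hv : v < 1 := by
    refine hv₁.lt_of_ne fun hv => ?_
    subst hv
    have hfw := congrArg f hw
    simp only [map_add, map_smul, smul_eq_mul, sub_self, zero_mul, zero_add, one_mul] at hfw
    linarith [mul_le_mul_of_nonneg_left hC (sub_nonneg.2 hβ₁), mul_le_mul_of_nonneg_left hA hβ₀]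
  -- Eliminating `B` from the two crossing equations writes `C` as a combination of `A, q, q'`;
  -- it is convex unless the coefficient of `A` is negative, and then eliminating `A` instead
  -- puts a point of `[q, q']` on `[B, C]`.
  rcases le_or_gt ((1 - α) * β) ((1 - u) * (1 - v)) with h | h
  · have hb : 0 < (1 - v) * u := mul_pos (sub_pos.2 hv) hu
    refine hC_Aqq' (mem_convexHull_triple_of_smul_eq (sub_nonneg.2 h) hb.le
      (mul_nonneg (sub_nonneg.2 hα₁) hv₀) (by linarith [mul_nonneg (sub_nonneg.2 hα₁) hv₀]) ?_)
    linear_combination (norm := module) (v - 1) • hz + (α - 1) • hw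
  · have key : (β * u) • q + ((1 - u) * v) • q' =
        (β * (1 - α) - (1 - u) * (1 - v)) • B + (β * α + (1 - u) * (1 - β)) • C := by
      linear_combination (norm := module) (-β) • hz - (1 - u) • hw
    have hfkey := congrArg f key
    simp only [map_add, map_smul, smul_eq_mul] at hfkey
    have hβ : 0 < β := by nlinarith [mul_nonneg (sub_nonneg.2 hu₁) (sub_nonneg.2 hv₁)]
    linarith [mul_lt_mul_of_pos_left hq (mul_pos hβ hu),
      mul_le_mul_of_nonneg_left hq'.le (mul_nonneg (sub_nonneg.2 hu₁) hv₀),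
      mul_le_mul_of_nonneg_left hB (sub_nonneg.2 h.le),
      mul_le_mul_of_nonneg_left hC (add_nonneg (mul_nonneg hβ₀ hα₀)
        (mul_nonneg (sub_nonneg.2 hu₁) (sub_nonneg.2 hβ₁)))]

theorem false_of_private_halfSpaces [FiniteDimensional ℝ E] (hE : Module.finrank ℝ E ≤ 2)
    {S : Set E} {p q : Fin 3 → E} (hp : Function.Injective p) (hpS : ∀ i, p i ∈ S)
    (hext : ∀ i, p i ∉ convexHull ℝ (S \ {p i})) (hpf : ∀ i, f (p i) ≤ b)
    (hqS : ∀ i, q i ∈ S) (hqf : ∀ i, b < f (q i))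
    (hpriv : ∀ i, ∃ (g : E →ₗ[ℝ] ℝ) (d : ℝ), g (p i) ≤ d ∧ g (q i) ≤ d ∧ ∀ j ≠ i, d < g (p j)) :
    False := by
  have hqp : ∀ i j, q i ≠ p j := fun i j h => (hqf i).not_ge (h ▸ hpf j)
  have hnotMem : ∀ i (T : Set E), T ⊆ S \ {p i} → p i ∉ convexHull ℝ T :=
    fun i T hT h => hext i (convexHull_mono hT h)
  -- With indices in `Fin 3`, the side opposite `p j` is `[p (j + 1), p (j + 2)]`.
  have hapex : ∀ i, ∃ j ≠ i,
      (segment ℝ (p j) (q i) ∩ segment ℝ (p (j + 1)) (p (j + 2))).Nonempty := by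
    intro i
    obtain ⟨j, hj⟩ : ∃ j, (segment ℝ (p j) (q i) ∩ segment ℝ (p (j + 1)) (p (j + 2))).Nonempty := by
      rcases exists_segment_crossing_opposite_side f hE (hpf 0) (hpf 1) (hpf 2) (hqf i)
        (hnotMem _ _ (by simp [insert_subset_iff, hpS, hqS, hp.eq_iff, hqp]))
        (hnotMem _ _ (by simp [insert_subset_iff, hpS, hqS, hp.eq_iff, hqp]))
        (hnotMem _ _ (by simp [insert_subset_iff, hpS, hqS, hp.eq_iff, hqp]))
        with h | h | h
      · exact ⟨0, h⟩
      · exact ⟨1, h⟩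
      · exact ⟨2, h⟩
    refine ⟨j, ?_, hj⟩
    rintro rfl
    obtain ⟨g, d, hpj, hqj, hp_ne⟩ := hpriv j
    rw [← convexHull_pair, ← convexHull_pair, ← not_disjoint_iff_nonempty_inter] at hj
    exact hj <| disjoint_convexHull_of_le_of_lt g d (by simp [hpj, hqj]) (by simp [hp_ne])
  choose a ha hcross using hapex
  obtain ⟨i, i', hii'⟩ := exists_apply_eq_apply_add_one_of_ne a ha
  have h₁ := hcross i'
  obtain ⟨h₂, h₀⟩ : a i + 1 + 1 = a i + 2 ∧ a i + 1 + 2 = a i := by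
    generalize a i = k
    revert k
    decide
  rw [hii', h₂, h₀] at h₁
  refine false_of_segment_crossings f (hpf _) (hpf _) (hpf _) (hqf i) (hqf i') ?_ ?_
    (hnotMem _ _ (by simp [insert_subset_iff, hpS, hqS, hp.eq_iff, hqp])) (hcross i) h₁
  · rw [← convexHull_pair]
    exact hnotMem _ _ (by simp [insert_subset_iff, hpS, hp.eq_iff])
  · rw [← convexHull_pair]
    exact hnotMem _ _ (by simp [insert_subset_iff, hpS, hqS, hp.eq_iff, hqp])

end Convex

theorem exists_mem_iff_eq_of_minimal_hitting {α : Type*} [DecidableEq α] {F : Set (Finset α)}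
    {N : Finset α} (hhit : ∀ E ∈ F, (N ∩ E).Nonempty)
    (hmin : ∀ N' : Finset α, N' ⊂ N → ∃ E ∈ F, N' ∩ E = ∅) {p : α} (hp : p ∈ N) :
    ∃ E ∈ F, ∀ x ∈ N, x ∈ E ↔ x = p := by
  obtain ⟨E, hE, hNE⟩ := hmin (N.erase p) (Finset.erase_ssubset hp)
  have h_eq : ∀ x ∈ N, x ∈ E → x = p := fun x hx hxE => by
    by_contra hxp
    exact Finset.notMem_empty x (hNE ▸ Finset.mem_inter.2 ⟨Finset.mem_erase.2 ⟨hxp, hx⟩, hxE⟩)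
  obtain ⟨y, hy⟩ := hhit E hE
  obtain ⟨hyN, hyE⟩ := Finset.mem_inter.1 hy
  exact ⟨E, hE, fun x hx => ⟨h_eq x hx, fun hxp => hxp ▸ h_eq y hyN hyE ▸ hyE⟩⟩

theorem Finset.exists_mem_notMem_of_card_eq {α : Type*} {s t : Finset α} (h : s.card = t.card)
    {x : α} (hxt : x ∈ t) (hxs : x ∉ s) : ∃ y ∈ s, y ∉ t := by
  by_contra! hst
  exact hxs (Finset.eq_of_subset_of_card_le hst h.ge ▸ hxt)

-- `dotL a x` unfolds to `a.1 * x.1 + a.2 * x.2`, the form in which half-planes are given.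
def dotL (a : ℝ × ℝ) : ℝ × ℝ →ₗ[ℝ] ℝ :=
  (LinearMap.lsmul ℝ ℝ a.1).coprod (LinearMap.lsmul ℝ ℝ a.2)

theorem exists_private_halfPlane {P N : Finset (ℝ × ℝ)} {t : ℕ} {F : Set (Finset (ℝ × ℝ))}
    (hhit : ∀ E ∈ F, (N ∩ E).Nonempty) (hmin : ∀ N' : Finset (ℝ × ℝ), N' ⊂ N → ∃ E ∈ F, N' ∩ E = ∅)
    (hF : ∀ E ∈ F, ∃ (c : ℝ × ℝ) (d : ℝ),
      E = P.filter (fun p => c.1 * p.1 + c.2 * p.2 ≤ d) ∧ E.card = t)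
    (hNP : N ⊆ P) {a : ℝ × ℝ} {b : ℝ}
    (hEt : (P.filter (fun p => a.1 * p.1 + a.2 * p.2 ≤ b)).card = t) {x y : ℝ × ℝ}
    (hx : x ∈ N) (hy : y ∈ N) (hya : dotL a y ≤ b) (hyx : y ≠ x) :
    ∃ q ∈ P, b < dotL a q ∧ ∃ (c : ℝ × ℝ) (d : ℝ),
      dotL c x ≤ d ∧ dotL c q ≤ d ∧ ∀ z ∈ N, z ≠ x → d < dotL c z := by
  obtain ⟨_, hEx, hEx_iff⟩ := exists_mem_iff_eq_of_minimal_hitting hhit hmin hx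
  obtain ⟨c, d, rfl, hExt⟩ := hF _ hEx
  obtain ⟨q, hq, hqa⟩ := Finset.exists_mem_notMem_of_card_eq (hExt.trans hEt.symm)
    (Finset.mem_filter.2 ⟨hNP hy, hya⟩) fun h => hyx ((hEx_iff y hy).1 h)
  obtain ⟨hqP, hqc⟩ := Finset.mem_filter.1 hq
  refine ⟨q, hqP, lt_of_not_ge fun h => hqa (Finset.mem_filter.2 ⟨hqP, h⟩), c, d,
    (Finset.mem_filter.1 ((hEx_iff x hx).2 rfl)).2, hqc, fun z hz hzx => lt_of_not_ge fun h => ?_⟩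
  exact hzx ((hEx_iff z hz).1 (Finset.mem_filter.2 ⟨hNP hz, h⟩))

theorem minimal_hitting_set_meets_in_at_most_two_general (P : Finset (ℝ × ℝ)) (t : ℕ)
    (E' : Set (Finset (ℝ × ℝ)))
    (hE' : E' = {E | ∃ (a : ℝ × ℝ) (b : ℝ), a ≠ 0 ∧
        E = P.filter (fun p => a.1 * p.1 + a.2 * p.2 ≤ b) ∧ E.card = t})
    (P' : Finset (ℝ × ℝ))
    (hP' : P' = P.filter
      (fun p => p ∉ convexHull ℝ ((P.erase p : Finset (ℝ × ℝ)) : Set (ℝ × ℝ))))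
    (N : Finset (ℝ × ℝ)) (hNsub : N ⊆ P')
    (hhit : ∀ E ∈ E', (N ∩ E).Nonempty)
    (hmin : ∀ N'' : Finset (ℝ × ℝ), N'' ⊂ N → ∃ E ∈ E', N'' ∩ E = ∅) :
    ∀ E ∈ E', (N ∩ E).card ≤ 2 := by
  intro E hE
  by_contra! hcard
  subst hE' hP'
  obtain ⟨a, b, -, rfl, hEt⟩ := hE
  obtain ⟨e⟩ : Nonempty (Fin 3 ↪ ↥(N ∩ P.filter (fun p => a.1 * p.1 + a.2 * p.2 ≤ b))) :=
    Function.Embedding.nonempty_of_card_le (by simpa using Nat.succ_le_of_lt hcard)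
  set p : Fin 3 → ℝ × ℝ := fun i => (e i : ℝ × ℝ)
  have hp : Function.Injective p := Subtype.val_injective.comp e.injective
  have hpN : ∀ i, p i ∈ N := fun i => (Finset.mem_inter.1 (e i).2).1
  have hpE : ∀ i, p i ∈ P ∧ dotL a (p i) ≤ b :=
    fun i => Finset.mem_filter.1 (Finset.mem_inter.1 (e i).2).2
  have hpext : ∀ i, p i ∉ convexHull ℝ (↑(P.erase (p i))) :=
    fun i => (Finset.mem_filter.1 (hNsub (hpN i))).2
  have hNP : N ⊆ P := fun x hx => (Finset.mem_filter.1 (hNsub hx)).1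
  choose q hqP hqa c d hpc hqc hNc using fun i => exists_private_halfPlane
    hhit hmin (fun _ ⟨c, d, _, h⟩ => ⟨c, d, h⟩) hNP hEt (hpN i) (hpN (i + 1)) (hpE (i + 1)).2
    (hp.ne (by simp))
  exact false_of_private_halfSpaces (dotL a) (by simp) (S := P) hp (fun i => (hpE i).1)
    (fun i => by simpa using hpext i) (fun i => (hpE i).2) hqP hqa
    fun i => ⟨dotL (c i), d i, hpc i, hqc i, fun j hj => hNc i _ (hpN j) (hp.ne hj)⟩

/-- The hitting-set lemma (Lemma 1): if `P` is a finite planar point set in general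
position, `t ≥ 3`, `ℰ'` is the family of traces `P ∩ h` of half-planes `h` with
`|P ∩ h| = t`, `P'` is the set of extreme points of `P`, and `N ⊆ P'` is a
containment-minimal hitting set for `ℰ'`, then `|N ∩ E| ≤ 2` for every `E ∈ ℰ'`. -/
theorem minimal_hitting_set_meets_in_at_most_two (P : Finset (ℝ × ℝ)) (t : ℕ) (ht : 3 ≤ t)
    (hgp : ∀ p ∈ P, ∀ q ∈ P, ∀ r ∈ P, p ≠ q → q ≠ r → p ≠ r →
      ¬ Collinear ℝ ({p, q, r} : Set (ℝ × ℝ)))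
    (E' : Set (Finset (ℝ × ℝ)))
    (hE' : E' = {E | ∃ (a : ℝ × ℝ) (b : ℝ), a ≠ 0 ∧
        E = P.filter (fun p => a.1 * p.1 + a.2 * p.2 ≤ b) ∧ E.card = t})
    (P' : Finset (ℝ × ℝ))
    (hP' : P' = P.filter
      (fun p => p ∉ convexHull ℝ ((P.erase p : Finset (ℝ × ℝ)) : Set (ℝ × ℝ))))
    (N : Finset (ℝ × ℝ)) (hNsub : N ⊆ P')
    (hhit : ∀ E ∈ E', (N ∩ E).Nonempty)
    (hmin : ∀ N'' : Finset (ℝ × ℝ), N'' ⊂ N → ∃ E ∈ E', N'' ∩ E = ∅) :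
    ∀ E ∈ E', (N ∩ E).card ≤ 2 :=
  minimal_hitting_set_meets_in_at_most_two_general P t E' hE' P' hP' N hNsub hhit hmin
end

section
/- For every integer k ≥ 1 and every finite set H of half-planes in ℝ², there exists a k-coloring χ : H → Fin k such that for every point p ∈ ℝ², if the number of half-planes in H containing p is at least 4k − 3, then for every color i < k there exists a half-plane h ∈ H with χ(h) = i and p ∈ h. (That is, f̄_H(k) ≤ 4k − 3.) -/
/-!
Pick `t` with `a.1 + a.2 * t ≠ 0` for every normal `a`. In the coordinates
`(p.2 - t * p.1, p.1)` each half-plane with `a.1 + a.2 * t > 0` is the region below a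
non-vertical line, and after the reflection `p ↦ -p` so is each one with `a.1 + a.2 * t < 0`.
A point of depth `4k - 3` has depth `2k - 1` in one of the two classes, so it suffices to color
the regions below a finite set `L` of lines with threshold `2k - 1`.

That goes by induction on `k`: it suffices to find `C ⊆ L` containing, for every point of depth
`m = 2k + 1`, one or two of the lines above it; `C` gets the new color and `L \ C` is colored
recursively. For each `x`, the `m` highest lines at `x` contain the lines above any point
`(x, y)` of depth `m`. Along increasing `x` these finitely many sets form a chain in which every
line that leaves is smaller (slope first) than every line that enters, and a greedy choice along
such a chain (repeatedly take the line that stays longest) meets every member once or twice.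
-/

open Finset
open scoped Classical

theorem Finset.exists_mem_notMem_of_card_eq_s3 {α : Type*} {s t : Finset α} (h : #s = #t) {a : α}
    (ha : a ∈ t) (ha' : a ∉ s) : ∃ b ∈ s, b ∉ t := by
  by_contra! hst
  exact ha' (eq_of_subset_of_card_le hst h.ge ▸ ha)

theorem Finset.exists_subset_card_eq_forall_lt {γ β : Type*} [LinearOrder β] {f : γ → β}
    (hf : Function.Injective f) (s : Finset γ) {m : ℕ} (hm : m ≤ #s) :
    ∃ t ⊆ s, #t = m ∧ ∀ a ∈ t, ∀ b ∈ s, b ∉ t → f b < f a := by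
  induction m with
  | zero => exact ⟨∅, empty_subset s, card_empty, by simp⟩
  | succ m ih =>
    obtain ⟨t, hts, htm, htop⟩ := ih (by omega)
    obtain ⟨a, ha, hmax⟩ := exists_max_image (s \ t) f
      (by rw [← card_pos, card_sdiff_of_subset hts]; omega)
    obtain ⟨has, hat⟩ := mem_sdiff.1 ha
    refine ⟨insert a t, insert_subset has hts, by rw [card_insert_of_notMem hat, htm], ?_⟩
    intro c hc b hb hbt
    have hbt' : b ∉ t := fun h => hbt (mem_insert_of_mem h)
    rcases mem_insert.1 hc with rfl | hct
    · exact (hmax b (mem_sdiff.2 ⟨hb, hbt'⟩)).lt_of_ne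
        (hf.ne fun h => hbt (h ▸ mem_insert_self _ _))
    · exact htop c hct b hb hbt'

theorem Finset.subset_of_forall_lt_of_card_le {γ β : Type*} [LinearOrder β] {f : γ → β}
    {s t u : Finset γ} (hts : t ⊆ s) (htop : ∀ a ∈ t, ∀ b ∈ s, b ∉ t → f b < f a)
    (hus : u ⊆ s) (hup : ∀ a ∈ s, ∀ b ∈ u, f b < f a → a ∈ u) (hcard : #t ≤ #u) : t ⊆ u := by
  intro a hat
  by_contra hau
  have hut : u ⊆ t := fun b hbu => by
    by_contra hbt
    exact hau (hup a (hts hat) b hbu (htop a hat b (hus hbu) hbt))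
  exact hau (eq_of_subset_of_card_le hut hcard ▸ hat)

theorem exists_monotone_enum_of_finite_range {σ β : Type*} [LinearOrder σ] [Nonempty σ]
    (f : σ → β) (hf : (Set.range f).Finite) :
    ∃ (N : ℕ) (s : ℕ → σ), Monotone s ∧ ∀ x, ∃ i ≤ N, f (s i) = f x := by
  set R : Finset σ := hf.toFinset.image (Function.invFun f)
  have hR : ∀ x, Function.invFun f (f x) ∈ R := fun x =>
    mem_image_of_mem _ (hf.mem_toFinset.2 ⟨x, rfl⟩)
  have hRpos : 0 < #R := card_pos.2 ⟨_, hR (Classical.arbitrary σ)⟩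
  set g := R.orderEmbOfFin rfl
  refine ⟨#R - 1, fun i => g ⟨min i (#R - 1), by omega⟩, fun i j hij => g.monotone ?_,
    fun x => ?_⟩
  · simp only [Fin.mk_le_mk]
    omega
  · obtain ⟨j, hj⟩ : Function.invFun f (f x) ∈ Set.range g := by
      rw [range_orderEmbOfFin]
      exact hR x
    refine ⟨j, by omega, ?_⟩
    have hgj : g ⟨min j (#R - 1), by omega⟩ = g j := congrArg g (Fin.ext (by simp; omega))
    beta_reduce
    rw [hgj, hj]
    exact Function.invFun_eq ⟨x, rfl⟩

section SeparatedChain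

variable {α : Type*} {e : ℕ → Finset α} {N m : ℕ}

noncomputable def stayEnd (e : ℕ → Finset α) (N : ℕ) (v : α) (i : ℕ) : ℕ :=
  Nat.findGreatest (fun j => ∀ h ∈ Set.Icc i j, v ∈ e h) N

theorem stayEnd_le (v : α) (i : ℕ) : stayEnd e N v i ≤ N := Nat.findGreatest_le N

theorem le_stayEnd {v : α} {i j : ℕ} (hj : j ≤ N) (hv : ∀ h ∈ Set.Icc i j, v ∈ e h) :
    j ≤ stayEnd e N v i :=
  Nat.le_findGreatest hj hv

theorem mem_of_le_stayEnd {v : α} {i h : ℕ} (hv : v ∈ e i) (hi : i ≤ N) (hih : i ≤ h)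
    (hh : h ≤ stayEnd e N v i) : v ∈ e h :=
  Nat.findGreatest_spec (P := fun j => ∀ h ∈ Set.Icc i j, v ∈ e h) (m := i) hi
    (fun _ hh => le_antisymm hh.2 hh.1 ▸ hv) h ⟨hih, hh⟩

theorem le_stayEnd_self {v : α} {i : ℕ} (hv : v ∈ e i) (hi : i ≤ N) : i ≤ stayEnd e N v i :=
  le_stayEnd hi fun _ hh => le_antisymm hh.2 hh.1 ▸ hv

theorem notMem_stayEnd_succ {v : α} {i : ℕ} (hv : v ∈ e i) (hi : i ≤ N)
    (hlt : stayEnd e N v i < N) : v ∉ e (stayEnd e N v i + 1) := by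
  intro hmem
  have := le_stayEnd (e := e) (i := i) hlt fun h hh => by
    rcases hh.2.lt_or_eq with hh' | rfl
    · exact mem_of_le_stayEnd hv hi hh.1 (Nat.lt_succ_iff.1 hh')
    · exact hmem
  omega

variable [LinearOrder α]

def IsSeparatedChain (e : ℕ → Finset α) (N : ℕ) : Prop :=
  ∀ ⦃i j⦄, i ≤ j → j ≤ N → ∀ a ∈ e i, a ∉ e j → ∀ b ∈ e j, b ∉ e i → a < b

theorem IsSeparatedChain.exists_le (hsep : IsSeparatedChain e N) (hcard : ∀ i ≤ N, #(e i) = m)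
    {i j : ℕ} (hij : i ≤ j) (hj : j ≤ N) {b : α} (hb : b ∈ e j) : ∃ a ∈ e i, a ≤ b := by
  by_cases hbi : b ∈ e i
  · exact ⟨b, hbi, le_rfl⟩
  obtain ⟨a, ha, ha'⟩ :=
    exists_mem_notMem_of_card_eq_s3 ((hcard i (hij.trans hj)).trans (hcard j hj).symm) hb hbi
  exact ⟨a, ha, (hsep hij hj a ha ha' b hb hbi).le⟩

def IsLastToLeave (e : ℕ → Finset α) (N i : ℕ) (b : α) : Prop :=
  b ∈ e i ∧ ∀ v ∈ e i, toLex (stayEnd e N v i, v) ≤ toLex (stayEnd e N b i, b)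

theorem exists_isLastToLeave {i : ℕ} (hne : (e i).Nonempty) : ∃ b, IsLastToLeave e N i b := by
  obtain ⟨b, hb, hmax⟩ := exists_max_image (e i) (fun v => toLex (stayEnd e N v i, v)) hne
  exact ⟨b, hb, hmax⟩

namespace IsLastToLeave

variable {i : ℕ} {b : α}

theorem stayEnd_le_of_mem (hb : IsLastToLeave e N i b) {v : α} (hv : v ∈ e i) :
    stayEnd e N v i ≤ stayEnd e N b i := by
  rcases Prod.Lex.le_iff.1 (hb.2 v hv) with h | h
  · exact h.le
  · exact h.1.le

theorem le_of_stayEnd_eq (hb : IsLastToLeave e N i b) {v : α} (hv : v ∈ e i)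
    (hvb : stayEnd e N v i = stayEnd e N b i) : v ≤ b := by
  rcases Prod.Lex.le_iff.1 (hb.2 v hv) with h | h
  · exact absurd hvb h.ne
  · exact h.2

theorem le_stayEnd (hb : IsLastToLeave e N i b) {v : α} {j : ℕ} (hij : i ≤ j) (hj : j ≤ N)
    (hv : ∀ h ∈ Set.Icc i j, v ∈ e h) : j ≤ stayEnd e N b i :=
  (_root_.le_stayEnd hj hv).trans (hb.stayEnd_le_of_mem (hv i ⟨le_rfl, hij⟩))

theorem lt_of_mem_stayEnd_succ (hb : IsLastToLeave e N i b) (hsep : IsSeparatedChain e N)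
    (hi : i ≤ N) (hJ : stayEnd e N b i < N) {u : α} (hu : u ∈ e (stayEnd e N b i + 1)) :
    b < u := by
  set J := stayEnd e N b i
  have hiJ : i ≤ J := le_stayEnd_self hb.1 hi
  rcases lt_trichotomy u b with hub | rfl | hbu
  · have hstay : ∀ h ∈ Set.Icc i (J + 1), u ∈ e h := by
      intro h hh
      rcases hh.2.lt_or_eq with hlt | rfl
      · by_contra hnot
        exact hub.not_gt (hsep (by omega) hJ b (mem_of_le_stayEnd hb.1 hi hh.1 (by omega))
          (notMem_stayEnd_succ hb.1 hi hJ) u hu hnot)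
      · exact hu
    have := hb.le_stayEnd (by omega) hJ hstay
    omega
  · exact absurd hu (notMem_stayEnd_succ hb.1 hi hJ)
  · exact hbu

theorem notMem_of_stayEnd_lt (hb : IsLastToLeave e N i b) (hsep : IsSeparatedChain e N)
    (hcard : ∀ i ≤ N, #(e i) = m) (hi : i ≤ N) {h : ℕ} (hJh : stayEnd e N b i < h)
    (hh : h ≤ N) : b ∉ e h := by
  intro hbh
  obtain ⟨u, hu, hub⟩ := hsep.exists_le hcard hJh hh hbh
  exact (hb.lt_of_mem_stayEnd_succ hsep hi (by omega) hu).not_ge hub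

/-- If `b` is present at `x ≤ i`, it is present throughout `[x, i]`: otherwise an element `w`
that entered at the last gap stays with `b` until `b` leaves, and `b < w` contradicts the
tie-break. -/
theorem mem_of_mem_of_le (hb : IsLastToLeave e N i b) (hsep : IsSeparatedChain e N)
    (hcard : ∀ i ≤ N, #(e i) = m) (hi : i ≤ N) {x : ℕ} (hbx : b ∈ e x) :
    ∀ y ∈ Set.Icc x i, b ∈ e y := by
  by_contra! ⟨y, ⟨hxy, hyi⟩, hby⟩
  set J := stayEnd e N b i
  set γ := Nat.findGreatest (fun y => b ∉ e y) i
  have hγ : b ∉ e γ := Nat.findGreatest_spec (P := fun y => b ∉ e y) hyi hby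
  have hγi : γ < i := lt_of_le_of_ne (Nat.findGreatest_le i) fun h => hγ (h ▸ hb.1)
  have hxγ : x < γ :=
    lt_of_le_of_ne ((hxy.trans (Nat.le_findGreatest hyi hby))) fun h => hγ (h ▸ hbx)
  have hbafter : ∀ z, γ < z → z ≤ J → b ∈ e z := fun z hγz hzJ => by
    rcases le_or_gt z i with hzi | hiz
    · simpa using Nat.findGreatest_is_greatest hγz hzi
    · exact mem_of_le_stayEnd hb.1 hi hiz.le hzJ
  obtain ⟨w, hwγ, hwx⟩ := exists_mem_notMem_of_card_eq_s3
    ((hcard γ (by omega)).trans (hcard x (by omega)).symm) hbx hγ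
  have hbw : b < w := hsep hxγ.le (by omega) b hbx hγ w hwγ hwx
  have hw : ∀ z ∈ Set.Icc i J, w ∈ e z := fun z ⟨hiz, hzJ⟩ => by
    by_contra hwz
    exact hbw.not_gt (hsep (by omega) (hzJ.trans (stayEnd_le b i)) w hwγ hwz b
      (hbafter z (by omega) hzJ) hγ)
  have hwi : w ∈ e i := hw i ⟨le_rfl, le_stayEnd_self hb.1 hi⟩
  have hwJ : stayEnd e N w i = J :=
    le_antisymm (hb.stayEnd_le_of_mem hwi) (_root_.le_stayEnd (stayEnd_le b i) hw)
  exact hbw.not_ge (hb.le_of_stayEnd_eq hwi hwJ)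

end IsLastToLeave

/-- `C` avoids every set before `i`, so prepending a run to the solution keeps all counts
at most `2`. -/
theorem IsSeparatedChain.exists_hitting_from (hsep : IsSeparatedChain e N)
    (hcard : ∀ i ≤ N, #(e i) = m) (hm : 0 < m) (i : ℕ) (hi : i ≤ N) :
    ∃ s, IsLastToLeave e N i s ∧ ∃ C : Finset α,
      (∀ h, i ≤ h → h ≤ N → (e h ∩ insert s C).Nonempty ∧ #(e h ∩ insert s C) ≤ 2) ∧
      ∀ c ∈ C, ∀ h < i, c ∉ e h := by
  obtain ⟨b, hb⟩ := exists_isLastToLeave (N := N) (card_pos.1 (hcard i hi ▸ hm))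
  set J := stayEnd e N b i
  have hiJ : i ≤ J := le_stayEnd_self hb.1 hi
  have hbmem : ∀ h, i ≤ h → h ≤ J → b ∈ e h := fun h => mem_of_le_stayEnd hb.1 hi
  refine ⟨b, hb, ?_⟩
  rcases (stayEnd_le b i : J ≤ N).lt_or_eq with hJ | hJ
  · obtain ⟨s, hs, C, hC, hCbefore⟩ := hsep.exists_hitting_from hcard hm (J + 1) (by omega)
    refine ⟨insert s C, fun h hih hhN => ?_, ?_⟩
    · rcases le_or_gt h J with hhJ | hJh
      · have hsub : e h ∩ insert b (insert s C) ⊆ {b, s} := by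
          intro c hc
          simp only [mem_inter, mem_insert] at hc
          rcases hc with ⟨hch, rfl | rfl | hcC⟩
          · simp
          · simp
          · exact absurd hch (hCbefore c hcC h (by omega))
        exact ⟨⟨b, by simp [hbmem h hih hhJ]⟩, (card_le_card hsub).trans card_le_two⟩
      · rw [inter_insert_of_notMem (hb.notMem_of_stayEnd_lt hsep hcard hi hJh hhN)]
        exact hC h (by omega) hhN
    · intro c hc h hhi hch
      rcases mem_insert.1 hc with rfl | hcC
      · have hstay := hs.mem_of_mem_of_le hsep hcard (by omega) hch
        have := hb.le_stayEnd (v := c) (by omega) (by omega)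
          fun z ⟨hiz, hzJ⟩ => hstay z ⟨by omega, hzJ⟩
        omega
      · exact hCbefore c hcC h (by omega) hch
  · refine ⟨∅, fun h hih hhN => ⟨⟨b, by simp [hbmem h hih (by omega)]⟩, ?_⟩, by simp⟩
    exact (card_le_card inter_subset_right).trans (by simp)
termination_by N - i

theorem IsSeparatedChain.exists_hitting_set (hsep : IsSeparatedChain e N)
    (hcard : ∀ i ≤ N, #(e i) = m) (hm : 0 < m) :
    ∃ C : Finset α, ∀ h ≤ N, (e h ∩ C).Nonempty ∧ #(e h ∩ C) ≤ 2 := by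
  obtain ⟨s, -, C, hC, -⟩ := hsep.exists_hitting_from hcard hm 0 (Nat.zero_le N)
  exact ⟨insert s C, fun h hh => hC h h.zero_le hh⟩

end SeparatedChain

/-- The line `y = slope * x + intercept` is encoded as `toLex (slope, intercept)`. -/
abbrev Line := ℝ ×ₗ ℝ

namespace Line

def eval (l : Line) (x : ℝ) : ℝ := (ofLex l).1 * x + (ofLex l).2

def below (l : Line) : Set (ℝ × ℝ) := {q | q.2 ≤ l.eval q.1}

def key (x : ℝ) (l : Line) : ℝ ×ₗ Line := toLex (l.eval x, l)

theorem key_injective (x : ℝ) : Function.Injective (key x) := fun _ _ h =>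
  congrArg Prod.snd (toLex_inj.1 h)

theorem slope_lt_of_le_of_lt {a b : Line} {x x' : ℝ} (hx : x < x') (h : b.eval x ≤ a.eval x)
    (h' : a.eval x' < b.eval x') : (ofLex a).1 < (ofLex b).1 := by
  simp only [eval] at h h'
  nlinarith

theorem lt_of_key_lt_of_key_lt {a b : Line} {x x' : ℝ} (hx : x < x')
    (h : key x b < key x a) (h' : key x' a < key x' b) : a < b := by
  simp only [key, Prod.Lex.lt_iff, ofLex_toLex] at h h'
  rcases h' with h' | ⟨-, h'⟩
  · have hle : b.eval x ≤ a.eval x := by rcases h with h | h <;> [exact h.le; exact h.1.le]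
    exact Prod.Lex.lt_iff.2 (Or.inl (slope_lt_of_le_of_lt hx hle h'))
  · exact Prod.Lex.lt_iff.2 h'

def IsTopAt (L : Finset Line) (x : ℝ) (T : Finset Line) : Prop :=
  T ⊆ L ∧ ∀ a ∈ T, ∀ b ∈ L, b ∉ T → key x b < key x a

theorem exists_isTopAt (L : Finset Line) (x : ℝ) {m : ℕ} (hm : m ≤ #L) :
    ∃ T, IsTopAt L x T ∧ #T = m := by
  obtain ⟨T, hTL, hTm, htop⟩ := exists_subset_card_eq_forall_lt (key_injective x) L hm
  exact ⟨T, ⟨hTL, htop⟩, hTm⟩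

theorem IsTopAt.subset_filter_mem_below {L T : Finset Line} {q : ℝ × ℝ} (hT : IsTopAt L q.1 T)
    (hq : #T ≤ #(L.filter (q ∈ ·.below))) : T ⊆ L.filter (q ∈ ·.below) := by
  refine subset_of_forall_lt_of_card_le hT.1 hT.2 (filter_subset _ L) (fun a ha b hb hba => ?_) hq
  have hle : b.eval q.1 ≤ a.eval q.1 := by
    rcases Prod.Lex.lt_iff.1 hba with h | h
    · exact h.le
    · exact h.1.le
  exact mem_filter.2 ⟨ha, (mem_filter.1 hb).2.trans hle⟩

theorem IsTopAt.lt_of_mem_of_notMem {L T T' : Finset Line} {x x' : ℝ} (hT : IsTopAt L x T)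
    (hT' : IsTopAt L x' T') (hx : x < x') {a b : Line} (ha : a ∈ T) (ha' : a ∉ T')
    (hb : b ∈ T') (hb' : b ∉ T) : a < b :=
  lt_of_key_lt_of_key_lt hx (hT.2 a ha b (hT'.1 hb) hb') (hT'.2 b hb a (hT.1 ha) ha')

/-- The top-`m` sets, taken at finitely many increasing abscissae, form a separated chain. -/
theorem exists_shallow_hitting_set (L : Finset Line) {m : ℕ} (hm : 0 < m) :
    ∃ C ⊆ L, ∀ q : ℝ × ℝ, m ≤ #(L.filter (q ∈ ·.below)) →
      (∃ c ∈ C, q ∈ c.below) ∧ m - 2 ≤ #(L.filter (q ∈ ·.below) \ C) := by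
  by_cases hmL : m ≤ #L
  swap
  · exact ⟨∅, empty_subset L, fun q hq => absurd ((hq.trans (card_filter_le _ _))) hmL⟩
  choose T hT hTm using fun x => exists_isTopAt L x hmL
  obtain ⟨N, s, hs, hsT⟩ := exists_monotone_enum_of_finite_range T
    ((L.powerset.finite_toSet).subset (Set.range_subset_iff.2 fun x => by simpa using (hT x).1))
  have hsep : IsSeparatedChain (T ∘ s) N := fun i j hij _ a ha ha' b hb hb' => by
    rcases (hs hij).lt_or_eq with hlt | heq
    · exact (hT _).lt_of_mem_of_notMem (hT _) hlt ha ha' hb hb'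
    · exact absurd (heq ▸ ha : a ∈ T (s j)) ha'
  obtain ⟨C, hC⟩ := hsep.exists_hitting_set (fun i _ => hTm (s i)) hm
  refine ⟨L.filter (· ∈ C), filter_subset _ L, fun q hq => ?_⟩
  obtain ⟨i, hiN, hi⟩ := hsT q.1
  obtain ⟨⟨c, hc⟩, hcard⟩ := hC i hiN
  have hsub : T (s i) ⊆ L.filter (q ∈ ·.below) :=
    hi ▸ (hT q.1).subset_filter_mem_below (by rw [hTm]; exact hq)
  obtain ⟨hcT, hcC⟩ := mem_inter.1 hc
  have hcq := mem_filter.1 (hsub hcT)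
  refine ⟨⟨c, mem_filter.2 ⟨hcq.1, hcC⟩, hcq.2⟩, ?_⟩
  have hsdiff : T (s i) \ C ⊆ L.filter (q ∈ ·.below) \ L.filter (· ∈ C) := fun l hl => by
    obtain ⟨hlT, hlC⟩ := mem_sdiff.1 hl
    exact mem_sdiff.2 ⟨hsub hlT, fun h => hlC (mem_filter.1 h).2⟩
  have hsplit := card_sdiff_add_card_inter (T (s i)) C
  have hle := card_le_card hsdiff
  simp only [Function.comp_apply, hTm] at hcard hsplit
  omega

end Line

def IsPolychromatic {ι β : Type*} {k : ℕ} (G : Finset ι) (r : ι → Set β) (d : ℕ)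
    (χ : ι → Fin k) : Prop :=
  ∀ p, d ≤ #(G.filter fun g => p ∈ r g) → ∀ i, ∃ g ∈ G, χ g = i ∧ p ∈ r g

theorem Line.exists_isPolychromatic (L : Finset Line) {k : ℕ} (hk : 1 ≤ k) :
    ∃ χ : Line → Fin k, IsPolychromatic L Line.below (2 * k - 1) χ := by
  induction k, hk using Nat.le_induction generalizing L with
  | base =>
    refine ⟨fun _ => 0, fun q hq i => ?_⟩
    obtain ⟨l, hl⟩ := card_pos.1 (by omega : 0 < #(L.filter fun l => q ∈ l.below))
    exact ⟨l, (mem_filter.1 hl).1, Subsingleton.elim _ _, (mem_filter.1 hl).2⟩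
  | succ k hk ih =>
    obtain ⟨C, hCL, hC⟩ := exists_shallow_hitting_set L (m := 2 * k + 1) (by omega)
    obtain ⟨χ, hχ⟩ := ih (L \ C)
    refine ⟨fun l => if l ∈ C then Fin.last k else (χ l).castSucc, fun q hq i => ?_⟩
    obtain ⟨⟨c, hcC, hcq⟩, hdeep⟩ := hC q (by omega)
    rcases Fin.eq_castSucc_or_eq_last i with ⟨j, rfl⟩ | rfl
    · have hfilter : (L \ C).filter (fun l => q ∈ l.below) = L.filter (q ∈ ·.below) \ C := by
        ext l
        simp only [mem_filter, mem_sdiff]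
        tauto
      obtain ⟨l, hl, rfl, hlq⟩ := hχ q (by rw [hfilter]; omega) j
      exact ⟨l, sdiff_subset hl, by simp [(mem_sdiff.1 hl).2], hlq⟩
    · exact ⟨c, hCL hcC, by simp [hcC], hcq⟩

theorem IsPolychromatic.comap {ι β γ : Type*} [DecidableEq ι] {k d : ℕ} {G : Finset (Set β)}
    {r : ι → Set γ} {φ : β → γ} {ℓ : Set β → ι} {χ : ι → Fin k} (hG : ∀ g ∈ G, g = φ ⁻¹' r (ℓ g))
    (hχ : IsPolychromatic (G.image ℓ) r d χ) : IsPolychromatic G id d (χ ∘ ℓ) := by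
  intro p hp i
  have hinj : Set.InjOn ℓ G := fun g hg g' hg' h => by rw [hG g hg, hG g' hg', h]
  have hdepth : d ≤ #((G.image ℓ).filter fun l => φ p ∈ r l) := by
    rw [filter_image, card_image_of_injOn]
    · convert hp using 3 with g hg
      exact (Set.ext_iff.1 (hG g hg) p).symm
    · exact hinj.mono (coe_subset.2 (filter_subset _ G))
  obtain ⟨_, hl, rfl, hpl⟩ := hχ (φ p) hdepth i
  obtain ⟨g, hg, rfl⟩ := mem_image.1 hl
  exact ⟨g, hg, rfl, by rw [id, hG g hg]; exact hpl⟩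

theorem IsPolychromatic.piecewise {ι β : Type*} {k d : ℕ} {G : Finset ι} {r : ι → Set β}
    {P : ι → Prop} [DecidablePred P] {χ₁ χ₂ : ι → Fin k}
    (h₁ : IsPolychromatic (G.filter P) r d χ₁)
    (h₂ : IsPolychromatic (G.filter fun g => ¬P g) r d χ₂) :
    IsPolychromatic G r (2 * d - 1) fun g => if P g then χ₁ g else χ₂ g := by
  intro p hp i
  have hsplit : #((G.filter P).filter fun g => p ∈ r g) +
      #((G.filter fun g => ¬P g).filter fun g => p ∈ r g) = #(G.filter fun g => p ∈ r g) := by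
    rw [filter_comm, filter_comm (fun g => ¬P g)]
    exact card_filter_add_card_filter_not P
  rcases le_or_gt d #((G.filter P).filter fun g => p ∈ r g) with hd | hd
  · obtain ⟨g, hg, rfl, hpg⟩ := h₁ p hd i
    exact ⟨g, (mem_filter.1 hg).1, if_pos (mem_filter.1 hg).2, hpg⟩
  · obtain ⟨g, hg, rfl, hpg⟩ := h₂ p (by omega) i
    exact ⟨g, (mem_filter.1 hg).1, if_neg (mem_filter.1 hg).2, hpg⟩

theorem exists_isPolychromatic_of_forall_eq_preimage_below {β : Type*} {G : Finset (Set β)}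
    {φ : β → ℝ × ℝ} {k : ℕ} (hk : 1 ≤ k) (hG : ∀ g ∈ G, ∃ l : Line, g = φ ⁻¹' l.below) :
    ∃ χ : Set β → Fin k, IsPolychromatic G id (2 * k - 1) χ := by
  choose! ℓ hℓ using hG
  obtain ⟨χ, hχ⟩ := Line.exists_isPolychromatic (G.image ℓ) hk
  exact ⟨χ ∘ ℓ, hχ.comap hℓ⟩

theorem exists_forall_add_mul_ne_zero (s : Finset (ℝ × ℝ)) (hs : ∀ a ∈ s, a ≠ 0) :
    ∃ t : ℝ, ∀ a ∈ s, a.1 + a.2 * t ≠ 0 := by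
  obtain ⟨t, ht⟩ := Infinite.exists_notMem_finset (s.image fun a => -a.1 / a.2)
  refine ⟨t, fun a ha hzero => ?_⟩
  by_cases ha2 : a.2 = 0
  · exact hs a ha (Prod.ext (by simpa [ha2] using hzero) ha2)
  · exact ht (mem_image.2 ⟨a, ha, by field_simp; linarith⟩)

def skewCoords (t : ℝ) (p : ℝ × ℝ) : ℝ × ℝ := (p.2 - t * p.1, p.1)

theorem exists_halfPlane_eq_preimage_below_of_pos {a : ℝ × ℝ} {t : ℝ}
    (ha : 0 < a.1 + a.2 * t) (b : ℝ) :
    ∃ l : Line, {x : ℝ × ℝ | a.1 * x.1 + a.2 * x.2 ≤ b} = skewCoords t ⁻¹' l.below := by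
  refine ⟨toLex (-a.2 / (a.1 + a.2 * t), b / (a.1 + a.2 * t)), Set.ext fun x => ?_⟩
  simp only [Set.mem_ofPred_eq, Set.mem_preimage, Line.below, Line.eval, skewCoords, ofLex_toLex]
  rw [div_mul_eq_mul_div, ← add_div, le_div_iff₀ ha]
  constructor <;> intro h <;> nlinarith

theorem exists_halfPlane_eq_preimage_below_of_neg {a : ℝ × ℝ} {t : ℝ}
    (ha : a.1 + a.2 * t < 0) (b : ℝ) :
    ∃ l : Line, {x : ℝ × ℝ | a.1 * x.1 + a.2 * x.2 ≤ b} =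
      (skewCoords t ∘ Neg.neg) ⁻¹' l.below := by
  obtain ⟨l, hl⟩ := exists_halfPlane_eq_preimage_below_of_pos (a := -a) (t := t)
    (by simp only [Prod.fst_neg, Prod.snd_neg]; linarith) b
  refine ⟨l, ?_⟩
  rw [Set.preimage_comp, ← hl]
  ext x
  simp only [Set.mem_ofPred_eq, Set.mem_preimage, Prod.fst_neg, Prod.snd_neg]
  ring_nf

/-- `f̄_H(k) ≤ 4k - 3`: every finite set of half-planes can be `k`-colored so that any
point covered by at least `4k - 3` of the half-planes is covered by one of each color. -/
theorem halfplanes_points_polychromatic_weak (k : ℕ) (hk : 1 ≤ k)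
    (H : Finset (Set (ℝ × ℝ)))
    (hH : ∀ h ∈ H, ∃ (a : ℝ × ℝ) (b : ℝ), a ≠ 0 ∧
      h = {x : ℝ × ℝ | a.1 * x.1 + a.2 * x.2 ≤ b}) :
    ∃ χ : Set (ℝ × ℝ) → Fin k,
      ∀ p : ℝ × ℝ, 4 * k - 3 ≤ (H.filter (fun h => p ∈ h)).card →
        ∀ i : Fin k, ∃ h ∈ H, χ h = i ∧ p ∈ h := by
  choose! a b hab using hH
  obtain ⟨t, ht⟩ :=
    exists_forall_add_mul_ne_zero (H.image a) (by simpa using fun h hh => (hab h hh).1)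
  have hpos : ∀ h ∈ H.filter fun h => 0 < (a h).1 + (a h).2 * t,
      ∃ l : Line, h = skewCoords t ⁻¹' l.below := fun h hh => by
    obtain ⟨hH, hc⟩ := mem_filter.1 hh
    rw [(hab h hH).2]
    exact exists_halfPlane_eq_preimage_below_of_pos hc _
  have hneg : ∀ h ∈ H.filter fun h => ¬0 < (a h).1 + (a h).2 * t,
      ∃ l : Line, h = (skewCoords t ∘ Neg.neg) ⁻¹' l.below := fun h hh => by
    obtain ⟨hH, hc⟩ := mem_filter.1 hh
    rw [(hab h hH).2]
    exact exists_halfPlane_eq_preimage_below_of_neg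
      ((not_lt.1 hc).lt_of_ne (ht _ (mem_image_of_mem a hH))) _
  obtain ⟨χ₁, hχ₁⟩ := exists_isPolychromatic_of_forall_eq_preimage_below hk hpos
  obtain ⟨χ₂, hχ₂⟩ := exists_isPolychromatic_of_forall_eq_preimage_below hk hneg
  refine ⟨_, fun p hp => hχ₁.piecewise hχ₂ p ?_⟩
  rwa [show 2 * (2 * k - 1) - 1 = 4 * k - 3 by omega]
end

section
/- Let d ≥ 1 and let H be a finite set of closed half-spaces in ℝ^d with |H| ≥ d + 1 whose union is all of ℝ^d. Then there exists a subset H' ⊆ H with |H'| = d + 1 whose union is all of ℝ^d. -/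
open scoped Classical

/-- Proposition 4: if a finite set `H` of closed half-spaces in `ℝ^d` (with `|H| ≥ d+1`)
covers `ℝ^d`, then some subset of exactly `d + 1` of them already covers `ℝ^d`. -/
theorem cover_by_d_plus_one_halfspaces (d : ℕ) (hd : 1 ≤ d)
    (H : Finset (Set (Fin d → ℝ))) (hcard : d + 1 ≤ H.card)
    (hH : ∀ h ∈ H, ∃ (a : Fin d → ℝ) (b : ℝ), a ≠ 0 ∧
      h = {x : Fin d → ℝ | ∑ i, a i * x i ≤ b})
    (hcover : ⋃ h ∈ H, h = Set.univ) :
    ∃ H' ⊆ H, H'.card = d + 1 ∧ ⋃ h ∈ H', h = Set.univ := by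
  by_contra hcon
  push_neg at hcon
  have hrank : Module.finrank ℝ (Fin d → ℝ) = d := by simp
  have hne : (⋂ h ∈ H, hᶜ).Nonempty := by
    apply Convex.helly_theorem (𝕜 := ℝ) (F := fun h : Set (Fin d → ℝ) => hᶜ)
    · rw [hrank]; exact hcard
    · intro h hh
      obtain ⟨a, b, ha, rfl⟩ := hH h hh
      have : {x : Fin d → ℝ | ∑ i, a i * x i ≤ b}ᶜ
          = {x : Fin d → ℝ | b < ∑ i, a i * x i} := by
        ext x; simp [not_le]
      rw [this]
      have hset : {x : Fin d → ℝ | b < ∑ i, a i * x i}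
          = {x : Fin d → ℝ | b < (∑ i, (a i) • (LinearMap.proj i : (Fin d → ℝ) →ₗ[ℝ] ℝ)) x} := by
        ext x; simp [smul_eq_mul]
      rw [hset]
      exact convex_halfSpace_gt (LinearMap.isLinear _) b
    · intro I hI hIcard
      have hne' : ⋃ h ∈ I, h ≠ Set.univ := hcon I hI (by rw [hrank] at hIcard; exact hIcard)
      obtain ⟨x, hx⟩ : ∃ x, x ∉ ⋃ h ∈ I, h := by
        by_contra h
        push_neg at h
        exact hne' (Set.eq_univ_of_forall h)
      exact ⟨x, by simpa using hx⟩
  obtain ⟨x, hx⟩ := hne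
  simp only [Set.mem_iInter, Set.mem_compl_iff] at hx
  have : x ∈ ⋃ h ∈ H, h := hcover ▸ Set.mem_univ x
  simp only [Set.mem_iUnion] at this
  obtain ⟨h, hh, hxh⟩ := this
  exact hx h hh hxh
end
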